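/- arXiv:math/0606044 — 9 statements merged into one kernel-verified Lean document; each statement's English description precedes it below -/
import Mathlib

section
/- Let λ be an e-restricted partition with set of beta numbers J of charge m (i.e. J = {λ_k + m - k : k ≥ 0}). Define up(λ) by: if U(J) = {x ∈ J : x - e ∉ J} is nonempty, let p = max U(J) and q = min{x > p : x ∉ p + eℤ, x - e ∈ J, x ∉ J}, and replace p by q in J. Then λ ⊆ up(λ), i.e. λ_k ≤ up(λ)_k for all k. -/
/-- A partition: a weakly decreasing, eventually zero sequence of naturals. -/
structure SeqPartition where
  parts : ℕ → ℕ
  antitone : ∀ k, parts (k + 1) ≤ parts k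
  eventually_zero : ∃ N, ∀ k, N ≤ k → parts k = 0

/-- A partition is `e`-restricted if consecutive parts differ by less than `e`. -/
def eRestricted (e : ℕ) (l : SeqPartition) : Prop :=
  ∀ k, l.parts k < l.parts (k + 1) + e

/-- The set of beta numbers of charge `m` of a partition. -/
def betaSet (l : SeqPartition) (m : ℤ) : Set ℤ :=
  {x | ∃ k : ℕ, x = (l.parts k : ℤ) + m - k}

/-- `U(J)`: the beads that can be slid up by one on their runner. -/
def USet (e : ℕ) (J : Set ℤ) : Set ℤ :=
  {x | x ∈ J ∧ x - (e : ℤ) ∉ J}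

lemma beta_strictAnti (l : SeqPartition) (m : ℤ) :
    StrictAnti (fun n : ℕ => (l.parts n : ℤ) + m - n) := by
  apply strictAnti_nat_of_succ_lt
  intro n
  have := l.antitone n
  push_cast
  omega

/-- Lemma 2.3(1): the  operation enlarges the partition:
if `p` is the greatest element of `U(J)`, `q` the least element of
`{x > p : x ∉ p + eℤ, x - e ∈ J, x ∉ J}`, and `up(λ)` has beta set
`(J \ {p}) ∪ {q}`, then `λ ⊆ up(λ)`. -/
theorem up_contains (e : ℕ) (he : 2 ≤ e) (m : ℤ)
    (lam mu : SeqPartition) (hres : eRestricted e lam)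
    (p q : ℤ)
    (hp : IsGreatest (USet e (betaSet lam m)) p)
    (hq : IsLeast {x : ℤ | p < x ∧ ¬ ((e : ℤ) ∣ (x - p)) ∧
      x - (e : ℤ) ∈ betaSet lam m ∧ x ∉ betaSet lam m} q)
    (hmu : betaSet mu m = (betaSet lam m \ {p}) ∪ {q}) :
    ∀ k, lam.parts k ≤ mu.parts k := by
  intro k
  set b : ℕ → ℤ := fun n => (lam.parts n : ℤ) + m - n with hb
  set b' : ℕ → ℤ := fun n => (mu.parts n : ℤ) + m - n with hb'
  have hbl : StrictAnti b := beta_strictAnti lam m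
  have hbm : StrictAnti b' := beta_strictAnti mu m
  have hpq : p < q := hq.1.1
  have hqJ : q ∉ betaSet lam m := hq.1.2.2.2
  set c : ℤ := b k with hc
  set g : ℕ → ℤ := fun j => if b j = p then q else b j with hg
  have hg_mem : ∀ j, g j ∈ betaSet mu m := by
    intro j
    rw [hmu]
    by_cases h : b j = p
    · right; simp [hg, h]
    · left
      refine ⟨⟨j, ?_⟩, ?_⟩ <;> simp [hg, h] <;> rfl
  have hg_ge : ∀ j ≤ k, c ≤ g j := by
    intro j hj
    have hbj : c ≤ b j := hbl.antitone hj
    by_cases h : b j = p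
    · simp only [hg, h, if_pos]
      omega
    · simpa [hg, h] using hbj
  have hg_inj : ∀ i j, g i = g j → i = j := by
    intro i j hij
    simp only [hg] at hij
    split_ifs at hij with hi hj2 hj2
    · exact hbl.injective (hi.trans hj2.symm)
    · exact absurd ⟨j, hij⟩ hqJ
    · exact absurd ⟨i, hij.symm⟩ hqJ
    · exact hbl.injective hij
  -- choose indices in mu's beta set
  choose n hn using hg_mem
  have hn_inj : ∀ i j, n i = n j → i = j := by
    intro i j h
    apply hg_inj
    rw [hn i, hn j, h]
  -- pigeonhole: some j ≤ k with n j ≥ k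
  obtain ⟨j, hjk, hnj⟩ : ∃ j ≤ k, k ≤ n j := by
    by_contra h
    push_neg at h
    have hinj : Set.InjOn n (Finset.range (k + 1)) := by
      intro i _ j _ hij
      exact hn_inj i j hij
    have hsub : (Finset.range (k + 1)).image n ⊆ Finset.range k := by
      intro x hx
      simp only [Finset.mem_image, Finset.mem_range] at hx ⊢
      obtain ⟨i, hi, rfl⟩ := hx
      exact h i (Nat.lt_succ_iff.mp hi)
    have h1 := Finset.card_le_card hsub
    rw [Finset.card_image_of_injOn hinj, Finset.card_range, Finset.card_range] at h1
    omega
  have h1 : c ≤ b' (n j) := by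
    have h0 := hg_ge j hjk
    rw [hn j] at h0
    exact h0
  have h2 : b' (n j) ≤ b' k := hbm.antitone hnj
  have : (lam.parts k : ℤ) + m - k ≤ (mu.parts k : ℤ) + m - k := le_trans h1 h2
  omega
end

section
/- With notation as in the up operation: if λ is an e-restricted partition and U(J) ≠ ∅, then the partition up(λ) corresponding to (J \ {p}) ∪ {q} is again e-restricted. -/
lemma beta_anti (l : SeqPartition) (m : ℤ) : ∀ {j k : ℕ}, j ≤ k →
    (l.parts k : ℤ) + m - k ≤ (l.parts j : ℤ) + m - j := by
  have hmono : Antitone l.parts := antitone_nat_of_succ_le l.antitone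
  intro j k hjk
  have := hmono hjk
  omega

lemma gap_of_restricted (e : ℕ) (l : SeqPartition) (m : ℤ) (h : eRestricted e l) :
    ∀ x ∈ betaSet l m, ∃ y ∈ betaSet l m, x - e ≤ y ∧ y < x := by
  rintro x ⟨k, rfl⟩
  refine ⟨(l.parts (k+1) : ℤ) + m - (k+1), ⟨k+1, rfl⟩, ?_, ?_⟩
  · have := h k; omega
  · have := l.antitone k; omega

lemma restricted_of_gap (e : ℕ) (l : SeqPartition) (m : ℤ)
    (h : ∀ x ∈ betaSet l m, ∃ y ∈ betaSet l m, x - e ≤ y ∧ y < x) :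
    eRestricted e l := by
  intro k
  obtain ⟨y, ⟨j, rfl⟩, h1, h2⟩ := h ((l.parts k : ℤ) + m - k) ⟨k, rfl⟩
  have hjk : k + 1 ≤ j := by
    by_contra hc
    exact absurd (beta_anti l m (by omega : j ≤ k)) (by omega)
  have := beta_anti l m hjk
  omega

/-- Lemma 2.3(2): the partition `up(λ)` is again `e`-restricted. -/
theorem up_eRestricted (e : ℕ) (he : 2 ≤ e) (m : ℤ)
    (lam mu : SeqPartition) (hres : eRestricted e lam)
    (p q : ℤ)
    (hp : IsGreatest (USet e (betaSet lam m)) p)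
    (hq : IsLeast {x : ℤ | p < x ∧ ¬ ((e : ℤ) ∣ (x - p)) ∧
      x - (e : ℤ) ∈ betaSet lam m ∧ x ∉ betaSet lam m} q)
    (hmu : betaSet mu m = (betaSet lam m \ {p}) ∪ {q}) :
    eRestricted e mu := by
  set J := betaSet lam m with hJ
  obtain ⟨⟨hpJ, hpeJ⟩, hpmax⟩ := hp
  obtain ⟨⟨hpq, hndvd, hqeJ, hqJ⟩, hqmin⟩ := hq
  have hgap := gap_of_restricted e lam m hres
  have hepos : (0 : ℤ) < e := by exact_mod_cast (by omega : 0 < e)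
  apply restricted_of_gap
  rw [hmu]
  rintro x (⟨hxJ, hxp⟩ | hxq)
  · -- x ∈ J, x ≠ p
    have hxp' : x ≠ p := hxp
    obtain ⟨y, hyJ, hy1, hy2⟩ := hgap x hxJ
    by_cases hyp : y = p
    · rw [hyp] at hy1 hy2
      -- x - e ≤ p < x
      by_cases hxpe : x = p + e
      · -- look for an element of J strictly between p and x
        by_cases hz : ∃ z ∈ J, p < z ∧ z < x
        · obtain ⟨z, hzJ, hz1, hz2⟩ := hz
          exact ⟨z, Or.inl ⟨hzJ, by intro h; rw [Set.mem_singleton_iff] at h; omega⟩,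
            by omega, hz2⟩
        · push_neg at hz
          -- construct an element of V below x, contradicting/using minimality of q
          obtain ⟨y', hy'J, hy'1, hy'2⟩ := hgap p hpJ
          have hy'ne : y' ≠ p - e := fun h => hpeJ (h ▸ hy'J)
          have hx'V : q ≤ y' + e := by
            apply hqmin
            refine ⟨by omega, ?_, by simpa using hy'J, ?_⟩
            · intro ⟨c, hc⟩
              have h1 : 0 < y' + e - p := by omega
              have h2 : y' + e - p < e := by omega
              have := Int.le_of_dvd h1 ⟨c, hc⟩
              omega
            · intro hmem
              exact absurd (hz _ hmem (by omega)) (by omega)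
          refine ⟨q, Or.inr rfl, by omega, by omega⟩
      · by_cases hxe : x - e ∈ J
        · refine ⟨x - e, Or.inl ⟨hxe, ?_⟩, le_refl _, by omega⟩
          intro h; rw [Set.mem_singleton_iff] at h; omega
        · -- x ∈ U(J) with x > p, contradiction with maximality of p
          have : x ≤ p := hpmax ⟨hxJ, hxe⟩
          omega
    · exact ⟨y, Or.inl ⟨hyJ, hyp⟩, hy1, hy2⟩
  · -- x = q
    rw [Set.mem_singleton_iff] at hxq
    subst hxq
    refine ⟨x - e, Or.inl ⟨hqeJ, ?_⟩, le_refl _, by omega⟩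
    intro h
    rw [Set.mem_singleton_iff] at h
    exact hndvd ⟨1, by omega⟩
end

section
/- Let λ be a partition with beta-number set J of charge m, and color each node x(a,b) (row a ≥ 1, column b ≥ 1) with residue m - a + b mod e. For each residue i ∈ ℤ/eℤ, let A_i(λ) and R_i(λ) be the sets of addable and removable i-nodes of λ. Then the pairing of the weight Λ_m - Σ_j N_j(λ)α_j with the coroot h_i equals |A_i(λ)| - |R_i(λ)|, where N_j(λ) is the number of nodes of λ with residue j. -/
/-- Row `a` (0-indexed) of `l` admits an addable node at its end. -/
def addableRow (l : SeqPartition) (a : ℕ) : Prop :=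
  a = 0 ∨ l.parts a < l.parts (a - 1)

/-- Row `a` (0-indexed) of `l` has a removable node at its end. -/
def removableRow (l : SeqPartition) (a : ℕ) : Prop :=
  l.parts (a + 1) < l.parts a

/-- The set of rows of `l` carrying an addable node of residue `i`
(the node at row `a`, column `l.parts a`, 0-indexed, has residue
`m + l.parts a - a` modulo `e`). -/
def AddRows (e : ℕ) (m : ℤ) (i : ZMod e) (l : SeqPartition) : Set ℕ :=
  {a | addableRow l a ∧ ((m + (l.parts a : ℤ) - (a : ℤ) : ℤ) : ZMod e) = i}

/-- The set of rows of `l` carrying a removable node of residue `i`. -/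
def RemRows (e : ℕ) (m : ℤ) (i : ZMod e) (l : SeqPartition) : Set ℕ :=
  {a | removableRow l a ∧ ((m + (l.parts a : ℤ) - 1 - (a : ℤ) : ℤ) : ZMod e) = i}

/-- The number of nodes of `l` of residue `j` (node in 0-indexed row `a`,
column `b` has residue `m + b - a` modulo `e`). -/
noncomputable def NodeCount (e : ℕ) (m : ℤ) (l : SeqPartition) (j : ZMod e) : ℕ :=
  Set.ncard {pr : ℕ × ℕ | pr.2 < l.parts pr.1 ∧
    ((m + (pr.2 : ℤ) - (pr.1 : ℤ) : ℤ) : ZMod e) = j}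

instance (l : SeqPartition) (a : ℕ) : Decidable (addableRow l a) := by
  unfold addableRow; infer_instance

instance (l : SeqPartition) (a : ℕ) : Decidable (removableRow l a) := by
  unfold removableRow; infer_instance

lemma ind_shift (e : ℕ) (x : ℤ) (c : ZMod e) :
    (((x + 1 : ℤ) : ZMod e) = c + 1) ↔ ((x : ℤ) : ZMod e) = c := by
  push_cast
  exact add_left_inj 1

lemma row_count (e : ℕ) (r : ℤ) (p : ℕ) (c : ZMod e) :
    ((∑ t ∈ Finset.range p, if ((r + t : ℤ) : ZMod e) = c then (1:ℤ) else 0)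
      - ∑ t ∈ Finset.range p, if ((r + t : ℤ) : ZMod e) = c + 1 then (1:ℤ) else 0)
    = (if ((r + p : ℤ) : ZMod e) = c + 1 then 1 else 0)
      - (if ((r : ℤ) : ZMod e) = c + 1 then 1 else 0) := by
  induction p with
  | zero => simp
  | succ n ih =>
      rw [Finset.sum_range_succ, Finset.sum_range_succ]
      have h1 : (((r + ((n:ℕ)+1 : ℕ) : ℤ)) : ZMod e) = c + 1 ↔ ((r + n : ℤ) : ZMod e) = c := by
        have := ind_shift e (r + n) c
        rw [show ((r + (n:ℤ)) + 1 : ℤ) = (r + ((n:ℕ)+1 : ℕ) : ℤ) by push_cast; ring] at this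
        exact this
      simp only [h1]
      linarith [ih]

lemma nodeCount_eq (e : ℕ) (m : ℤ) (lam : SeqPartition) (N : ℕ)
    (hN : ∀ k, N ≤ k → lam.parts k = 0) (j : ZMod e) :
    (NodeCount e m lam j : ℤ)
      = ∑ a ∈ Finset.range N, ∑ b ∈ Finset.range (lam.parts a),
          if ((m - (a:ℤ) + (b:ℤ) : ℤ) : ZMod e) = j then (1:ℤ) else 0 := by
  classical
  have hmono : Antitone lam.parts := antitone_nat_of_succ_le lam.antitone
  set P := lam.parts 0 with hP
  have hS : {pr : ℕ×ℕ | pr.2 < lam.parts pr.1 ∧ ((m + (pr.2:ℤ) - (pr.1:ℤ) : ℤ):ZMod e) = j}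
      = ↑((Finset.range N ×ˢ Finset.range P).filter
          (fun pr => pr.2 < lam.parts pr.1 ∧ ((m + (pr.2:ℤ) - (pr.1:ℤ) : ℤ):ZMod e) = j)) := by
    ext ⟨a,b⟩
    simp only [Set.mem_setOf_eq, Finset.coe_filter, Finset.mem_product, Finset.mem_range]
    constructor
    · rintro ⟨hb, hres⟩
      refine ⟨⟨?_, ?_⟩, hb, hres⟩
      · by_contra h
        push_neg at h
        have := hN a h
        omega
      · exact lt_of_lt_of_le hb (hmono (Nat.zero_le a))
    · rintro ⟨_, hb, hres⟩; exact ⟨hb, hres⟩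
  rw [NodeCount, hS, Set.ncard_coe_finset, Finset.card_filter, Nat.cast_sum,
      Finset.sum_product]
  refine Finset.sum_congr rfl fun a _ => ?_
  have hpa : lam.parts a ≤ P := hmono (Nat.zero_le a)
  have e2 : Finset.range (lam.parts a) = (Finset.range P).filter (fun b => b < lam.parts a) := by
    ext b
    simp only [Finset.mem_filter, Finset.mem_range]
    omega
  rw [e2, Finset.sum_filter]
  refine Finset.sum_congr rfl fun b _ => ?_
  dsimp only
  simp only [Nat.cast_ite, Nat.cast_one, Nat.cast_zero]
  have h3 : (m - (a:ℤ) + (b:ℤ)) = ((m:ℤ) + (b:ℤ) - (a:ℤ)) := by ring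
  rw [h3]
  by_cases h1 : b < lam.parts a <;> simp [h1]

lemma addRows_eq (e : ℕ) (m : ℤ) (i : ZMod e) (lam : SeqPartition) (N : ℕ)
    (hN : ∀ k, N ≤ k → lam.parts k = 0) :
    ((AddRows e m i lam).ncard : ℤ)
      = ∑ a ∈ Finset.range (N+1),
          if (addableRow lam a ∧ ((m - (a:ℤ) + (lam.parts a : ℤ) : ℤ):ZMod e) = i)
            then (1:ℤ) else 0 := by
  have hS : AddRows e m i lam = ↑((Finset.range (N+1)).filter
      (fun a => addableRow lam a ∧ ((m - (a:ℤ) + (lam.parts a : ℤ) : ℤ):ZMod e) = i)) := by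
    ext a
    simp only [AddRows, Set.mem_setOf_eq, Finset.coe_filter, Finset.mem_range]
    rw [show (m + (lam.parts a : ℤ) - (a:ℤ)) = (m - (a:ℤ) + (lam.parts a : ℤ)) by ring]
    constructor
    · rintro ⟨ha, hres⟩
      refine ⟨?_, ha, hres⟩
      by_contra h
      push_neg at h
      rcases ha with h0 | hlt
      · omega
      · have h1 : lam.parts a = 0 := hN a (by omega)
        have h2 : lam.parts (a-1) = 0 := hN (a-1) (by omega)
        omega
    · rintro ⟨_, h⟩; exact h
  rw [hS, Set.ncard_coe_finset, Finset.card_filter, Nat.cast_sum]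
  simp only [Nat.cast_ite, Nat.cast_one, Nat.cast_zero]

lemma remRows_eq (e : ℕ) (m : ℤ) (i : ZMod e) (lam : SeqPartition) (N : ℕ)
    (hN : ∀ k, N ≤ k → lam.parts k = 0) :
    ((RemRows e m i lam).ncard : ℤ)
      = ∑ a ∈ Finset.range (N+1),
          if (removableRow lam a ∧ ((m - (a:ℤ) + (lam.parts a : ℤ) - 1 : ℤ):ZMod e) = i)
            then (1:ℤ) else 0 := by
  have hS : RemRows e m i lam = ↑((Finset.range (N+1)).filter
      (fun a => removableRow lam a ∧ ((m - (a:ℤ) + (lam.parts a : ℤ) - 1 : ℤ):ZMod e) = i)) := by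
    ext a
    simp only [RemRows, Set.mem_setOf_eq, Finset.coe_filter, Finset.mem_range]
    rw [show (m + (lam.parts a : ℤ) - 1 - (a:ℤ)) = (m - (a:ℤ) + (lam.parts a : ℤ) - 1) by ring]
    constructor
    · rintro ⟨ha, hres⟩
      refine ⟨?_, ha, hres⟩
      by_contra h
      push_neg at h
      have h1 : lam.parts a = 0 := hN a (by omega)
      have h2 : lam.parts (a+1) ≤ lam.parts a := lam.antitone a
      unfold removableRow at ha
      omega
    · rintro ⟨_, h⟩; exact h
  rw [hS, Set.ncard_coe_finset, Finset.card_filter, Nat.cast_sum]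
  simp only [Nat.cast_ite, Nat.cast_one, Nat.cast_zero]


/-- Lemma 3.2(1): the pairing of `wt(λ) = Λ_m - Σ_j N_j(λ) α_j` with the simple
coroot `h_i` equals `|A_i(λ)| - |R_i(λ)|`.  Here `Λ_j(h_i) = δ_{ij}` and
`α_j(h_i) = 2δ_{ij} - δ_{i,j+1} - δ_{i,j-1}`, so the left-hand side is
`δ_{i,m} - (2 N_i - N_{i-1} - N_{i+1})` (which is correct also for `e = 2`). -/
theorem weight_pairing (e : ℕ) (he : 2 ≤ e) (m : ℤ) (i : ZMod e)
    (lam : SeqPartition) :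
    ((if ((m : ZMod e) = i) then (1 : ℤ) else 0)
        - (2 * (NodeCount e m lam i : ℤ) - (NodeCount e m lam (i - 1) : ℤ)
            - (NodeCount e m lam (i + 1) : ℤ)))
      = ((AddRows e m i lam).ncard : ℤ) - ((RemRows e m i lam).ncard : ℤ) := by
  classical
  obtain ⟨N, hN⟩ := lam.eventually_zero
  rw [nodeCount_eq e m lam N hN i, nodeCount_eq e m lam N hN (i-1),
      nodeCount_eq e m lam N hN (i+1), addRows_eq e m i lam N hN,
      remRows_eq e m i lam N hN]
  set f : ℕ → ZMod e → ℤ :=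
    fun a c => if ((m - (a:ℤ) + (lam.parts a : ℤ) : ℤ) : ZMod e) = c then 1 else 0 with hf
  set ra : ℕ → ℤ := fun a => if ((m - (a:ℤ) : ℤ) : ZMod e) = i then 1 else 0 with hra
  set Sb : ℕ → ZMod e → ℤ := fun a c => ∑ b ∈ Finset.range (lam.parts a),
      if ((m - (a:ℤ) + (b:ℤ) : ℤ) : ZMod e) = c then (1:ℤ) else 0 with hSb
  -- per-row identity
  have hrow : ∀ a : ℕ, 2 * Sb a i - Sb a (i-1) - Sb a (i+1)
      = (f a (i+1) - f a i) + (ra a - ra (a+1)) := by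
    intro a
    have key1 : Sb a i - Sb a (i+1)
        = f a (i+1) - (if ((m - (a:ℤ) : ℤ) : ZMod e) = i + 1 then (1:ℤ) else 0) :=
      row_count e (m - a) (lam.parts a) i
    have key2 : Sb a (i-1) - Sb a i = f a i - ra a := by
      have := row_count e (m - a) (lam.parts a) (i-1)
      rwa [sub_add_cancel] at this
    have hshift : (if ((m - (a:ℤ) : ℤ) : ZMod e) = i + 1 then (1:ℤ) else 0) = ra (a+1) := by
      have h : ((m - (a:ℤ) : ℤ) : ZMod e) = i + 1 ↔ ((m - ((a+1:ℕ):ℤ) : ℤ) : ZMod e) = i := by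
        have h2 := ind_shift e (m - ((a+1:ℕ):ℤ)) i
        rw [show (m - ((a+1:ℕ):ℤ) + 1 : ℤ) = m - (a:ℤ) from by push_cast; ring] at h2
        exact h2
      simp only [hra, h]
    rw [hshift] at key1
    linarith [key1, key2]
  have hcomb : 2 * (∑ a ∈ Finset.range N, Sb a i) - (∑ a ∈ Finset.range N, Sb a (i-1))
      - (∑ a ∈ Finset.range N, Sb a (i+1))
      = (∑ a ∈ Finset.range N, f a (i+1)) - (∑ a ∈ Finset.range N, f a i)
        + (ra 0 - ra N) := by
    rw [Finset.mul_sum, ← Finset.sum_sub_distrib, ← Finset.sum_sub_distrib]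
    rw [show (∑ a ∈ Finset.range N, f a (i+1)) - (∑ a ∈ Finset.range N, f a i) + (ra 0 - ra N)
        = (∑ a ∈ Finset.range N, (f a (i+1) - f a i)) + ∑ a ∈ Finset.range N, (ra a - ra (a+1))
        from by rw [Finset.sum_sub_distrib, Finset.sum_range_sub' ra N]]
    rw [← Finset.sum_add_distrib]
    exact Finset.sum_congr rfl fun a _ => hrow a
  have hra0 : ra 0 = (if ((m : ZMod e) = i) then (1:ℤ) else 0) := by
    simp [hra]
  have hraN : ra N = f N i := by
    simp only [hra, hf, hN N le_rfl]
    norm_num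
  have hL : (if ((m : ZMod e) = i) then (1 : ℤ) else 0)
      - (2 * (∑ a ∈ Finset.range N, Sb a i) - (∑ a ∈ Finset.range N, Sb a (i-1))
          - (∑ a ∈ Finset.range N, Sb a (i+1)))
      = (∑ a ∈ Finset.range (N+1), f a i) - (∑ a ∈ Finset.range N, f a (i+1)) := by
    rw [hcomb, hra0, Finset.sum_range_succ _ N, ← hraN]
    ring
  have haddind0 : (if (addableRow lam 0 ∧ ((m - ((0:ℕ):ℤ) + (lam.parts 0 : ℤ) : ℤ):ZMod e) = i)
        then (1:ℤ) else 0) = f 0 i := by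
    have h0 : addableRow lam 0 := Or.inl rfl
    simp only [hf, h0, true_and]
  have hremindN : (if (removableRow lam N ∧ ((m - (N:ℤ) + (lam.parts N : ℤ) - 1 : ℤ):ZMod e) = i)
        then (1:ℤ) else 0) = 0 := by
    have hnr : ¬ removableRow lam N := by
      unfold removableRow
      rw [hN N le_rfl, hN (N+1) (by omega)]
      omega
    simp [hnr]
  have hstep : ∀ a : ℕ,
      (if (addableRow lam (a+1) ∧ ((m - ((a+1:ℕ):ℤ) + (lam.parts (a+1) : ℤ) : ℤ):ZMod e) = i)
        then (1:ℤ) else 0)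
      - (if (removableRow lam a ∧ ((m - (a:ℤ) + (lam.parts a : ℤ) - 1 : ℤ):ZMod e) = i)
        then (1:ℤ) else 0)
      = f (a+1) i - f a (i+1) := by
    intro a
    have haddiff : addableRow lam (a+1) ↔ lam.parts (a+1) < lam.parts a := by
      unfold addableRow
      simp
    have hresrem : ((m - (a:ℤ) + (lam.parts a : ℤ) - 1 : ℤ):ZMod e) = i
        ↔ ((m - (a:ℤ) + (lam.parts a : ℤ) : ℤ):ZMod e) = i + 1 := by
      have h := ind_shift e (m - (a:ℤ) + (lam.parts a : ℤ) - 1) i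
      rw [show (m - (a:ℤ) + (lam.parts a : ℤ) - 1 + 1 : ℤ) = m - (a:ℤ) + (lam.parts a : ℤ)
        by ring] at h
      exact h.symm
    by_cases hp : lam.parts (a+1) < lam.parts a
    · have h1 : addableRow lam (a+1) := haddiff.mpr hp
      have h2 : removableRow lam a := hp
      simp only [hf, h1, h2, true_and, hresrem]
    · have hep : lam.parts (a+1) = lam.parts a :=
        le_antisymm (lam.antitone a) (not_lt.mp hp)
      have hiff : ((m - ((a+1:ℕ):ℤ) + (lam.parts (a+1) : ℤ) : ℤ):ZMod e) = i
          ↔ ((m - (a:ℤ) + (lam.parts a : ℤ) : ℤ):ZMod e) = i + 1 := by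
        rw [hep]
        have h := ind_shift e (m - ((a+1:ℕ):ℤ) + (lam.parts a : ℤ)) i
        rw [show (m - ((a+1:ℕ):ℤ) + (lam.parts a : ℤ) + 1 : ℤ)
            = m - (a:ℤ) + (lam.parts a : ℤ) from by push_cast; ring] at h
        exact h.symm
      have h1 : ¬ addableRow lam (a+1) := fun hc => hp (haddiff.mp hc)
      have h2 : ¬ removableRow lam a := hp
      simp only [hf, h1, h2, false_and, if_false, hiff]
      ring
  have hR : (∑ a ∈ Finset.range (N+1),
        if (addableRow lam a ∧ ((m - (a:ℤ) + (lam.parts a : ℤ) : ℤ):ZMod e) = i)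
          then (1:ℤ) else 0)
      - (∑ a ∈ Finset.range (N+1),
        if (removableRow lam a ∧ ((m - (a:ℤ) + (lam.parts a : ℤ) - 1 : ℤ):ZMod e) = i)
          then (1:ℤ) else 0)
      = (∑ a ∈ Finset.range (N+1), f a i) - (∑ a ∈ Finset.range N, f a (i+1)) := by
    rw [Finset.sum_range_succ' _ N, Finset.sum_range_succ _ N, hremindN, haddind0,
        Finset.sum_range_succ' (fun a => f a i) N]
    have hsum2 : ∑ a ∈ Finset.range N,
        ((if (addableRow lam (a+1) ∧ ((m - ((a+1:ℕ):ℤ) + (lam.parts (a+1) : ℤ) : ℤ):ZMod e) = i)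
            then (1:ℤ) else 0)
          - (if (removableRow lam a ∧ ((m - (a:ℤ) + (lam.parts a : ℤ) - 1 : ℤ):ZMod e) = i)
            then (1:ℤ) else 0))
        = ∑ a ∈ Finset.range N, (f (a+1) i - f a (i+1)) :=
      Finset.sum_congr rfl fun a _ => hstep a
    rw [Finset.sum_sub_distrib, Finset.sum_sub_distrib] at hsum2
    linarith [hsum2]
  rw [hL]
  exact hR.symm
end

section
/- Let λ be a partition that is an s_i-core, meaning that for its beta-number set J (charge m), no x ∈ U(J) = {x ∈ J : x - e ∉ J} satisfies x ≡ i or x ≡ i+1 (mod e). Then λ cannot have both an addable i-node and a removable i-node: at least one of A_i(λ), R_i(λ) is empty. -/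

lemma beta_mono (l : SeqPartition) (m : ℤ) :
    ∀ k d : ℕ, (l.parts (k + d) : ℤ) + m - (↑(k + d) : ℤ) ≤ (l.parts k : ℤ) + m - k - d := by
  intro k d
  induction d with
  | zero => simp
  | succ d ih =>
    have h := l.antitone (k + d)
    have h' : (l.parts (k + d + 1) : ℤ) ≤ l.parts (k + d) := by exact_mod_cast h
    have heq : k + (d + 1) = k + d + 1 := by omega
    rw [heq]
    push_cast at ih ⊢
    linarith [h', ih]

lemma runner_down (e : ℕ) (m : ℤ) (i : ZMod e) (lam : SeqPartition)
    (hcore : ∀ x ∈ USet e (betaSet lam m),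
      ((x : ZMod e) ≠ i ∧ (x : ZMod e) ≠ i + 1))
    (x : ℤ) (hx : x ∈ betaSet lam m)
    (hres : (x : ZMod e) = i ∨ (x : ZMod e) = i + 1) :
    ∀ n : ℕ, x - n * e ∈ betaSet lam m := by
  intro n
  induction n with
  | zero => simpa using hx
  | succ n ih =>
    have hres' : ((x - n * e : ℤ) : ZMod e) = i ∨ ((x - n * e : ℤ) : ZMod e) = i + 1 := by
      have hc : ((x - n * e : ℤ) : ZMod e) = (x : ZMod e) := by
        push_cast
        simp [ZMod.natCast_self]
      rw [hc]; exact hres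
    have hstep : (x - n * e) - e ∈ betaSet lam m := by
      by_contra hcon
      have := hcore (x - n * e) ⟨ih, hcon⟩
      rcases hres' with h | h
      · exact this.1 h
      · exact this.2 h
    have heq : x - ((n : ℕ) + 1 : ℕ) * e = (x - n * e) - e := by push_cast; ring
    rw [heq]
    exact hstep

lemma reach_down (e : ℕ) (he : 2 ≤ e) (x y : ℤ) (hle : y ≤ x)
    (hmod : (x : ZMod e) = (y : ZMod e)) : ∃ n : ℕ, x - n * e = y := by
  have h : x ≡ y [ZMOD (e : ℤ)] := by
    rwa [← ZMod.intCast_eq_intCast_iff] at *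
  have hdvd : (e : ℤ) ∣ x - y := (h.symm).dvd
  obtain ⟨c, hc⟩ := hdvd
  have he0 : (0 : ℤ) < e := by exact_mod_cast Nat.lt_of_lt_of_le (by norm_num) he
  have hc0 : 0 ≤ c := by nlinarith
  refine ⟨c.toNat, ?_⟩
  have : ((c.toNat : ℤ)) = c := Int.toNat_of_nonneg hc0
  rw [this]
  linarith [hc]

/-- Part of Lemma 3.2(2): if `λ` is an `s_i`-core (no bead of `U(J)` lies on
the runners of residue `i` or `i+1`), then `λ` cannot have both an addable
`i`-node and a removable `i`-node. -/
theorem si_core_addable_or_removable_empty (e : ℕ) (he : 2 ≤ e) (m : ℤ)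
    (i : ZMod e) (lam : SeqPartition)
    (hcore : ∀ x ∈ USet e (betaSet lam m),
      ((x : ZMod e) ≠ i ∧ (x : ZMod e) ≠ i + 1)) :
    AddRows e m i lam = ∅ ∨ RemRows e m i lam = ∅ := by
  by_contra hcon
  push_neg at hcon
  obtain ⟨hA, hR⟩ := hcon
  obtain ⟨a, ha⟩ := hA
  obtain ⟨b, hb⟩ := hR
  obtain ⟨haAdd, haRes⟩ := ha
  obtain ⟨hbRem, hbRes⟩ := hb
  set f : ℕ → ℤ := fun k => (lam.parts k : ℤ) + m - k with hf
  have hxa : f a ∈ betaSet lam m := ⟨a, rfl⟩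
  have hxb : f b ∈ betaSet lam m := ⟨b, rfl⟩
  -- residues
  have hra : ((f a : ℤ) : ZMod e) = i := by
    have : f a = m + (lam.parts a : ℤ) - a := by simp [hf]; ring
    rw [this]; exact haRes
  have hrb : ((f b : ℤ) : ZMod e) = i + 1 := by
    have h1 : f b = (m + (lam.parts b : ℤ) - 1 - b) + 1 := by simp [hf]; ring
    rw [h1, Int.cast_add, Int.cast_one, hbRes]
  -- addable: f a + 1 not a beta number
  have hadd : f a + 1 ∉ betaSet lam m := by
    rintro ⟨k, hk⟩
    rcases haAdd with h0 | hlt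
    · subst h0
      rcases Nat.exists_eq_add_of_le (Nat.zero_le k) with ⟨d, hd⟩
      have := beta_mono lam m 0 k
      simp only [Nat.zero_add] at this
      have : f k ≤ f 0 - k := by simpa [hf] using this
      have hk' : f 0 + 1 = f k := hk
      have hk0 : (0:ℤ) ≤ k := Int.ofNat_nonneg k
      linarith
    · -- a ≥ 1 since otherwise lam.parts 0 < lam.parts 0
      rcases Nat.eq_zero_or_pos a with rfl | hpos
      · simp at hlt
      obtain ⟨c, rfl⟩ : ∃ c, a = c + 1 := ⟨a - 1, (Nat.succ_pred_eq_of_pos hpos).symm⟩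
      have hltc : lam.parts (c + 1) < lam.parts c := by simpa using hlt
      rcases le_or_gt (c + 1) k with hle | hgt
      · obtain ⟨d, rfl⟩ := Nat.exists_eq_add_of_le hle
        have hm := beta_mono lam m (c + 1) d
        have hm' : f (c + 1 + d) ≤ f (c + 1) - d := by simpa [hf] using hm
        have hk' : f (c + 1) + 1 = f (c + 1 + d) := hk
        have hd0 : (0:ℤ) ≤ d := Int.ofNat_nonneg d
        linarith
      · -- k ≤ c
        have hkc : k ≤ c := Nat.lt_succ_iff.mp hgt
        obtain ⟨d, rfl⟩ := Nat.exists_eq_add_of_le hkc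
        have hm := beta_mono lam m k d
        have hm' : f (k + d) ≤ f k - d := by simpa [hf] using hm
        have hk' : f (k + d + 1) + 1 = f k := hk
        -- f (k+d+1) ≥ f (k+d) - (parts (k+d) - parts (k+d+1) + 1)
        have hc1 : (lam.parts (k + d + 1) : ℤ) < lam.parts (k + d) := by exact_mod_cast hltc
        have hfd : f (k + d + 1) = (lam.parts (k + d + 1) : ℤ) + m - (k + d + 1) := by
          simp [hf]
        have hfd2 : f (k + d) = (lam.parts (k + d) : ℤ) + m - (k + d) := by
          simp [hf]
        have hfk : f k = (lam.parts k : ℤ) + m - k := rfl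
        have hd0 : (0:ℤ) ≤ d := Int.ofNat_nonneg d
        -- from hk': parts(k+d+1) + m - (k+d+1) + 1 = parts k + m - k
        -- so parts k = parts(k+d+1) - d ≤ parts(k+d+1) < parts (k+d)
        -- but parts (k+d) ≤ parts k since k ≤ k+d... antitone gives parts(k+d) ≤ parts k
        have hanti : (lam.parts (k + d) : ℤ) ≤ lam.parts k := by
          have : ∀ d', lam.parts (k + d') ≤ lam.parts k := by
            intro d'
            induction d' with
            | zero => simp
            | succ d' ih => exact le_trans (lam.antitone (k + d')) ih
          exact_mod_cast this d
        rw [hfd, hfk] at hk'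
        linarith
  -- removable: f b - 1 not a beta number
  have hrem : f b - 1 ∉ betaSet lam m := by
    rintro ⟨k, hk⟩
    rcases le_or_gt k b with hle | hgt
    · obtain ⟨d, rfl⟩ := Nat.exists_eq_add_of_le hle
      have hm := beta_mono lam m k d
      have hm' : f (k + d) ≤ f k - d := by simpa [hf] using hm
      have hd0 : (0:ℤ) ≤ d := Int.ofNat_nonneg d
      have hk' : f (k + d) - 1 = f k := hk
      linarith
    · obtain ⟨d, rfl⟩ := Nat.exists_eq_add_of_le hgt
      have hm := beta_mono lam m (b + 1) d
      have hm' : f (b + 1 + d) ≤ f (b + 1) - d := by simpa [hf] using hm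
      have hd0 : (0:ℤ) ≤ d := Int.ofNat_nonneg d
      have hk' : f b - 1 = f (b + 1 + d) := hk
      have hc1 : (lam.parts (b + 1) : ℤ) < lam.parts b := by exact_mod_cast hbRem
      have hfb1 : f (b + 1) = (lam.parts (b + 1) : ℤ) + m - (b + 1) := by
        simp [hf]
      have hfb : f b = (lam.parts b : ℤ) + m - b := rfl
      linarith [hm', hk', hc1]
  -- first: f b ≤ f a
  have h1 : f b ≤ f a := by
    by_contra hlt
    push_neg at hlt
    -- f a + 1 ≤ f b, both ≡ i+1
    have hle : f a + 1 ≤ f b := hlt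
    have hmod : ((f b : ℤ) : ZMod e) = ((f a + 1 : ℤ) : ZMod e) := by
      push_cast
      rw [hrb, hra]
    obtain ⟨n, hn⟩ := reach_down e he (f b) (f a + 1) hle hmod
    have := runner_down e m i lam hcore (f b) hxb (Or.inr hrb) n
    rw [hn] at this
    exact hadd this
  -- second: f a + 2 ≤ f b
  have h2 : f a + 2 ≤ f b := by
    by_contra hlt
    push_neg at hlt
    -- f b - 1 ≤ f a, both ≡ i
    have hle : f b - 1 ≤ f a := by linarith
    have hmod : ((f a : ℤ) : ZMod e) = ((f b - 1 : ℤ) : ZMod e) := by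
      push_cast
      rw [hra, hrb]
      ring
    obtain ⟨n, hn⟩ := reach_down e he (f a) (f b - 1) hle hmod
    have := runner_down e m i lam hcore (f a) hxa (Or.inl hra) n
    rw [hn] at this
    exact hrem this
  linarith
end

section
/- For i ≠ e - 1, let λ be an s_i-core with beta-number set J of charge m, and let s_i λ be the partition obtained from λ by adding all addable i-nodes if A_i(λ) ≠ ∅, or removing all removable i-nodes if R_i(λ) ≠ ∅ (if both are empty, s_i λ = λ). Then the beta-number set of s_i λ is obtained from J by swapping the beads in residue classes i and i+1 mod e; that is, x ∈ s_i J iff σ(x) ∈ J, where σ exchanges x ≡ i with x + 1 and x ≡ i+1 with x - 1 (mod e) and fixes all other integers. -/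
/-- The runner-swapping map on `ℤ`: exchanges `x ≡ i (mod e)` with `x + 1`
and `x ≡ i + 1 (mod e)` with `x - 1`, fixing all other integers. -/
def runnerSwap (e i : ℕ) (x : ℤ) : ℤ :=
  if (x : ZMod e) = (i : ZMod e) then x + 1
  else if (x : ZMod e) = ((i + 1 : ℕ) : ZMod e) then x - 1
  else x

/-- The `k`-th beta number. -/
def bnum (l : SeqPartition) (m : ℤ) (k : ℕ) : ℤ := (l.parts k : ℤ) + m - k

lemma bnum_strictAnti (l : SeqPartition) (m : ℤ) : StrictAnti (bnum l m) := by
  apply strictAnti_nat_of_succ_lt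
  intro k
  have := l.antitone k
  unfold bnum
  push_cast
  omega

lemma mem_bnum_iff (l : SeqPartition) (m : ℤ) (x : ℤ) :
    x ∈ betaSet l m ↔ ∃ k, bnum l m k = x := by
  constructor
  · rintro ⟨k, rfl⟩; exact ⟨k, rfl⟩
  · rintro ⟨k, rfl⟩; exact ⟨k, rfl⟩

lemma bnum_mem (l : SeqPartition) (m : ℤ) (k : ℕ) : bnum l m k ∈ betaSet l m :=
  ⟨k, rfl⟩

lemma addable_iff (l : SeqPartition) (m : ℤ) (a : ℕ) :
    addableRow l a ↔ bnum l m a + 1 ∉ betaSet l m := by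
  have hSA := bnum_strictAnti l m
  constructor
  · intro h hmem
    obtain ⟨k, hk⟩ := (mem_bnum_iff l m _).1 hmem
    have hka : k < a := by
      have : bnum l m a < bnum l m k := by omega
      exact (hSA.lt_iff_gt).1 this
    rcases a with _ | b
    · omega
    · rcases h with h | h
      · omega
      · simp only [Nat.add_sub_cancel] at h
        have hkb : k ≤ b := by omega
        have h1 : bnum l m b ≤ bnum l m k := hSA.antitone hkb
        have h2 : bnum l m (b+1) + 2 ≤ bnum l m b := by
          unfold bnum; push_cast; omega
        omega
  · intro hnm
    by_contra hna
    unfold addableRow at hna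
    push_neg at hna
    obtain ⟨ha0, hle⟩ := hna
    obtain ⟨b, rfl⟩ : ∃ b, a = b + 1 := ⟨a - 1, by omega⟩
    simp only [Nat.add_sub_cancel] at hle
    have h1 : l.parts (b+1) ≤ l.parts b := l.antitone b
    apply hnm
    rw [mem_bnum_iff]
    exact ⟨b, by unfold bnum; push_cast; omega⟩

lemma removable_iff (l : SeqPartition) (m : ℤ) (a : ℕ) :
    removableRow l a ↔ bnum l m a - 1 ∉ betaSet l m := by
  have hSA := bnum_strictAnti l m
  constructor
  · intro h hmem
    obtain ⟨k, hk⟩ := (mem_bnum_iff l m _).1 hmem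
    have hka : a < k := by
      have : bnum l m k < bnum l m a := by omega
      exact (hSA.lt_iff_gt).1 this
    have h1 : bnum l m k ≤ bnum l m (a+1) := hSA.antitone (by omega)
    have h2 : bnum l m (a+1) + 2 ≤ bnum l m a := by
      unfold bnum removableRow at *; push_cast; omega
    omega
  · intro hnm
    by_contra hna
    unfold removableRow at hna
    push_neg at hna
    have h1 : l.parts (a+1) ≤ l.parts a := l.antitone a
    apply hnm
    rw [mem_bnum_iff]
    exact ⟨a + 1, by unfold bnum; push_cast; omega⟩

lemma low_mem (l : SeqPartition) (m : ℤ) : ∃ N : ℤ, ∀ x : ℤ, x ≤ N → x ∈ betaSet l m := by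
  obtain ⟨N, hN⟩ := l.eventually_zero
  refine ⟨m - N, fun x hx => ?_⟩
  rw [mem_bnum_iff]
  refine ⟨(m - x).toNat, ?_⟩
  have hk : N ≤ (m - x).toNat := by omega
  rw [bnum, hN _ hk]
  push_cast
  omega

lemma mem_le (l : SeqPartition) (m : ℤ) {x : ℤ} (hx : x ∈ betaSet l m) :
    x ≤ bnum l m 0 := by
  obtain ⟨k, rfl⟩ := (mem_bnum_iff l m _).1 hx
  exact (bnum_strictAnti l m).antitone (Nat.zero_le k)

lemma runner_top (e : ℕ) (he : 0 < e) (l : SeqPartition) (m : ℤ) (r : ZMod e)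
    (c : ℤ) (hc : (c : ZMod e) = r)
    (hdc : ∀ x ∈ betaSet l m, (x : ZMod e) = r → x - (e : ℤ) ∈ betaSet l m) :
    ∃ t : ℤ, (t : ZMod e) = r ∧ t ∈ betaSet l m ∧
      ∀ x : ℤ, (x : ZMod e) = r → (x ∈ betaSet l m ↔ x ≤ t) := by
  haveI : NeZero e := ⟨by omega⟩
  obtain ⟨N, hNlow⟩ := low_mem l m
  set k : ℤ := max (c - N) 0 with hkdef
  have hk0 : 0 ≤ k := le_max_right _ _
  have he1 : (1 : ℤ) ≤ e := by exact_mod_cast he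
  have hek : k ≤ (e : ℤ) * k := le_mul_of_one_le_left hk0 he1
  set y : ℤ := c - (e : ℤ) * k with hydef
  have hyN : y ≤ N := by
    have : c - N ≤ k := le_max_left _ _
    omega
  have hymem : y ∈ betaSet l m := hNlow y hyN
  have hyr : (y : ZMod e) = r := by
    have : ((y : ℤ) : ZMod e) = (c : ZMod e) - ((e : ℕ) : ZMod e) * (k : ZMod e) := by
      push_cast [hydef]; ring
    rw [this, ZMod.natCast_self, hc]; ring
  obtain ⟨t, ⟨htmem, htr⟩, htmax⟩ :=
    Int.exists_greatest_of_bdd (P := fun z => z ∈ betaSet l m ∧ (z : ZMod e) = r)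
      ⟨bnum l m 0, fun z hz => mem_le l m hz.1⟩ ⟨y, hymem, hyr⟩
  refine ⟨t, htr, htmem, fun x hx => ?_⟩
  constructor
  · intro hxmem
    exact htmax x ⟨hxmem, hx⟩
  · intro hxt
    have hdvd : (e : ℤ) ∣ t - x := by
      have h0 : ((t - x : ℤ) : ZMod e) = 0 := by
        push_cast
        rw [htr, hx]; ring
      exact (ZMod.intCast_zmod_eq_zero_iff_dvd _ _).1 h0
    obtain ⟨d, hd⟩ := hdvd
    have hd0 : 0 ≤ d := by
      by_contra hneg
      push_neg at hneg
      have : (e : ℤ) * d < 0 := mul_neg_of_pos_of_neg (by exact_mod_cast he) hneg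
      linarith
    have key : ∀ n : ℕ, t - (e : ℤ) * n ∈ betaSet l m := by
      intro n
      induction n with
      | zero => simpa using htmem
      | succ n ih =>
        have hres : ((t - (e : ℤ) * n : ℤ) : ZMod e) = r := by
          have : ((t - (e : ℤ) * n : ℤ) : ZMod e)
              = (t : ZMod e) - ((e : ℕ) : ZMod e) * (n : ZMod e) := by
            push_cast; ring
          rw [this, ZMod.natCast_self, htr]; ring
        have h2 := hdc _ ih hres
        have harith : t - (e : ℤ) * n - (e : ℤ) = t - (e : ℤ) * ((n + 1 : ℕ) : ℤ) := by
          push_cast; ring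
        rwa [harith] at h2
    have hx' : x = t - (e : ℤ) * ((d.toNat : ℕ) : ℤ) := by
      have h3 : ((d.toNat : ℤ)) = d := Int.toNat_of_nonneg hd0
      rw [h3]; linarith
    rw [hx']
    exact key d.toNat

/-- Lemma 3.3(1): for `i ≠ e - 1`, if `λ` is an `s_i`-core and `s_i λ` is
obtained by adding all addable `i`-nodes (when there is one), or else removing
all removable `i`-nodes, then the beta set of `s_i λ` is obtained from that of
`λ` by swapping the `i`-th and `(i+1)`-th runners:
`x ∈ s_i J ↔ σ(x) ∈ J`. -/
theorem si_core_swap_runners (e : ℕ) (he : 2 ≤ e) (m : ℤ)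
    (i : ℕ) (hi : i + 1 < e) (lam mu : SeqPartition)
    (hcore : ∀ x ∈ USet e (betaSet lam m),
      ((x : ZMod e) ≠ (i : ZMod e) ∧ (x : ZMod e) ≠ ((i + 1 : ℕ) : ZMod e)))
    (hadd : (AddRows e m (i : ZMod e) lam).Nonempty →
      ∀ a, (a ∈ AddRows e m (i : ZMod e) lam → mu.parts a = lam.parts a + 1) ∧
           (a ∉ AddRows e m (i : ZMod e) lam → mu.parts a = lam.parts a))
    (hrem : ¬ (AddRows e m (i : ZMod e) lam).Nonempty →
      ∀ a, (a ∈ RemRows e m (i : ZMod e) lam → mu.parts a = lam.parts a - 1) ∧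
           (a ∉ RemRows e m (i : ZMod e) lam → mu.parts a = lam.parts a)) :
    ∀ x : ℤ, x ∈ betaSet mu m ↔ runnerSwap e i x ∈ betaSet lam m := by
  classical
  haveI : NeZero e := ⟨by omega⟩
  have he0 : 0 < e := by omega
  have he2 : (2 : ℤ) ≤ (e : ℤ) := by exact_mod_cast he
  set I : ZMod e := ((i : ℕ) : ZMod e) with hIdef
  set I' : ZMod e := ((i + 1 : ℕ) : ZMod e) with hI'def
  have hI1 : I' = I + 1 := by rw [hIdef, hI'def]; push_cast; ring
  have hII' : I ≠ I' := by
    intro h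
    have h1 : I.val = i := by rw [hIdef]; exact ZMod.val_cast_of_lt (by omega)
    have h2 : I'.val = i + 1 := by rw [hI'def]; exact ZMod.val_cast_of_lt hi
    rw [h, h2] at h1
    omega
  have hdcI : ∀ x ∈ betaSet lam m, (x : ZMod e) = I → x - (e : ℤ) ∈ betaSet lam m := by
    intro x hx hr
    by_contra h
    exact (hcore x ⟨hx, h⟩).1 hr
  have hdcI' : ∀ x ∈ betaSet lam m, (x : ZMod e) = I' → x - (e : ℤ) ∈ betaSet lam m := by
    intro x hx hr
    by_contra h
    exact (hcore x ⟨hx, h⟩).2 hr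
  obtain ⟨t, htI, htmem, hT⟩ :=
    runner_top e he0 lam m I (i : ℤ) (by rw [hIdef]; push_cast; rfl) hdcI
  obtain ⟨u, huI, humem, hU⟩ :=
    runner_top e he0 lam m I' ((i : ℤ) + 1) (by rw [hI'def]; push_cast; ring) hdcI'
  have hcast1 : ∀ y : ℤ, ((y + 1 : ℤ) : ZMod e) = (y : ZMod e) + 1 := fun y => by
    push_cast; ring
  have hcast2 : ∀ y : ℤ, ((y - 1 : ℤ) : ZMod e) = (y : ZMod e) - 1 := fun y => by
    push_cast; ring
  have hAdd : ∀ a, a ∈ AddRows e m I lam ↔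
      ((bnum lam m a : ZMod e) = I ∧ bnum lam m a + 1 ∉ betaSet lam m) := by
    intro a
    have harith : (m + (lam.parts a : ℤ) - (a : ℤ)) = bnum lam m a := by unfold bnum; ring
    constructor
    · rintro ⟨h1, h2⟩
      rw [harith] at h2
      exact ⟨h2, (addable_iff lam m a).1 h1⟩
    · rintro ⟨h1, h2⟩
      exact ⟨(addable_iff lam m a).2 h2, by rw [harith]; exact h1⟩
  have hRem : ∀ a, a ∈ RemRows e m I lam ↔
      ((bnum lam m a : ZMod e) = I' ∧ bnum lam m a - 1 ∉ betaSet lam m) := by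
    intro a
    have harith : (m + (lam.parts a : ℤ) - 1 - (a : ℤ)) = bnum lam m a - 1 := by
      unfold bnum; ring
    have hres : ((bnum lam m a - 1 : ℤ) : ZMod e) = I ↔ (bnum lam m a : ZMod e) = I' := by
      rw [hcast2, hI1]
      constructor
      · intro h; rw [← h]; ring
      · intro h; rw [h]; ring
    constructor
    · rintro ⟨h1, h2⟩
      rw [harith] at h2
      exact ⟨hres.1 h2, (removable_iff lam m a).1 h1⟩
    · rintro ⟨h1, h2⟩
      exact ⟨(removable_iff lam m a).2 h2, by rw [harith]; exact hres.2 h1⟩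
  have hdvd : (e : ℤ) ∣ t + 1 - u := by
    have h0 : ((t + 1 - u : ℤ) : ZMod e) = 0 := by
      push_cast
      rw [htI, huI, hI1]; ring
    exact (ZMod.intCast_zmod_eq_zero_iff_dvd _ _).1 h0
  obtain ⟨d, hd⟩ := hdvd
  rcases lt_trichotomy d 0 with hdneg | hdzero | hdpos
  · -- remove case : u ≥ t + 1 + e
    have htu : t + 1 + (e : ℤ) ≤ u := by
      have h1 : (e : ℤ) * d ≤ (e : ℤ) * (-1) :=
        mul_le_mul_of_nonneg_left (by omega) (by omega)
      have h2 : (e : ℤ) * (-1) = -(e : ℤ) := by ring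
      linarith
    have hAddE : ∀ a, a ∉ AddRows e m I lam := by
      intro a ha
      obtain ⟨hres, hnm⟩ := (hAdd a).1 ha
      apply hnm
      have hle : bnum lam m a ≤ t := (hT _ hres).1 (bnum_mem lam m a)
      have hres' : ((bnum lam m a + 1 : ℤ) : ZMod e) = I' := by
        rw [hcast1, hres, hI1]
      exact (hU _ hres').2 (by omega)
    have hmu := hrem (fun ⟨a, ha⟩ => hAddE a ha)
    have hMov : ∀ a, a ∈ RemRows e m I lam ↔
        ((bnum lam m a : ZMod e) = I' ∧ t + 2 ≤ bnum lam m a) := by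
      intro a
      rw [hRem]
      constructor
      · rintro ⟨hres1, h2⟩
        refine ⟨hres1, ?_⟩
        by_contra hlt
        push_neg at hlt
        apply h2
        have hres' : ((bnum lam m a - 1 : ℤ) : ZMod e) = I := by
          rw [hcast2, hres1, hI1]; ring
        exact (hT _ hres').2 (by omega)
      · rintro ⟨hres1, h2⟩
        refine ⟨hres1, fun hmem => ?_⟩
        have hres' : ((bnum lam m a - 1 : ℤ) : ZMod e) = I := by
          rw [hcast2, hres1, hI1]; ring
        have := (hT _ hres').1 hmem
        omega
    have hb' : ∀ a, (a ∈ RemRows e m I lam → bnum mu m a = bnum lam m a - 1) ∧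
        (a ∉ RemRows e m I lam → bnum mu m a = bnum lam m a) := by
      intro a
      obtain ⟨h1, h2⟩ := hmu a
      constructor
      · intro h
        have hp1 : 1 ≤ lam.parts a := by
          have hrm : removableRow lam a := h.1
          unfold removableRow at hrm
          omega
        have h3 := h1 h
        unfold bnum
        rw [h3, Nat.cast_sub hp1]
        push_cast
        ring
      · intro h
        have h3 := h2 h
        unfold bnum
        rw [h3]
    intro x
    rw [mem_bnum_iff]
    unfold runnerSwap
    rw [← hIdef, ← hI'def]
    split_ifs with h1 h2
    · -- x ≡ I
      have hx1 : ((x + 1 : ℤ) : ZMod e) = I' := by rw [hcast1, h1, hI1]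
      rw [hU _ hx1]
      constructor
      · rintro ⟨a, ha⟩
        by_cases hA : a ∈ RemRows e m I lam
        · obtain ⟨hresa, -⟩ := (hMov a).1 hA
          have hle : bnum lam m a ≤ u := (hU _ hresa).1 (bnum_mem lam m a)
          have hbm := (hb' a).1 hA
          omega
        · have hba : bnum lam m a = x := by rw [← (hb' a).2 hA, ha]
          have hresa : (bnum lam m a : ZMod e) = I := by rw [hba]; exact h1
          have hle : bnum lam m a ≤ t := (hT _ hresa).1 (bnum_mem lam m a)
          omega
      · intro hxu
        by_cases hxt : x ≤ t
        · obtain ⟨a, ha⟩ := (mem_bnum_iff lam m x).1 ((hT x h1).2 hxt)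
          refine ⟨a, ?_⟩
          have hA : a ∉ RemRows e m I lam := by
            rw [hMov]
            rintro ⟨hresa, -⟩
            rw [ha] at hresa
            exact hII' (h1.symm.trans hresa)
          rw [(hb' a).2 hA, ha]
        · push_neg at hxt
          obtain ⟨a, ha⟩ := (mem_bnum_iff lam m (x + 1)).1 ((hU _ hx1).2 hxu)
          refine ⟨a, ?_⟩
          have hA : a ∈ RemRows e m I lam :=
            (hMov a).2 ⟨by rw [ha]; exact hx1, by omega⟩
          rw [(hb' a).1 hA, ha]
          ring
    · -- x ≡ I'
      have hx1 : ((x - 1 : ℤ) : ZMod e) = I := by rw [hcast2, h2, hI1]; ring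
      rw [hT _ hx1]
      constructor
      · rintro ⟨a, ha⟩
        by_cases hA : a ∈ RemRows e m I lam
        · exfalso
          obtain ⟨hresa, -⟩ := (hMov a).1 hA
          have hxI : (x : ZMod e) = I := by
            rw [← ha, (hb' a).1 hA, hcast2, hresa, hI1]; ring
          exact hII' (hxI.symm.trans h2)
        · have hba : bnum lam m a = x := by rw [← (hb' a).2 hA, ha]
          have hresa : (bnum lam m a : ZMod e) = I' := by rw [hba]; exact h2
          have hnmov : ¬ (t + 2 ≤ bnum lam m a) := by
            intro hge
            exact hA ((hMov a).2 ⟨hresa, hge⟩)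
          omega
      · intro hxt
        have hxu : x ≤ u := by omega
        obtain ⟨a, ha⟩ := (mem_bnum_iff lam m x).1 ((hU x h2).2 hxu)
        refine ⟨a, ?_⟩
        have hA : a ∉ RemRows e m I lam := by
          rw [hMov]
          rintro ⟨-, hge⟩
          omega
        rw [(hb' a).2 hA, ha]
    · -- other residues
      constructor
      · rintro ⟨a, ha⟩
        by_cases hA : a ∈ RemRows e m I lam
        · exfalso
          obtain ⟨hresa, -⟩ := (hMov a).1 hA
          apply h1
          rw [← ha, (hb' a).1 hA, hcast2, hresa, hI1]; ring
        · exact (mem_bnum_iff lam m x).2 ⟨a, by rw [← (hb' a).2 hA, ha]⟩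
      · intro hx
        obtain ⟨a, ha⟩ := (mem_bnum_iff lam m x).1 hx
        refine ⟨a, ?_⟩
        have hA : a ∉ RemRows e m I lam := by
          rw [hMov]
          rintro ⟨hresa, -⟩
          rw [ha] at hresa
          exact h2 hresa
        rw [(hb' a).2 hA, ha]
  · -- neither case : u = t + 1
    have htu : t + 1 = u := by rw [hdzero, mul_zero] at hd; omega
    have hAddE : ∀ a, a ∉ AddRows e m I lam := by
      intro a ha
      obtain ⟨hres, hnm⟩ := (hAdd a).1 ha
      apply hnm
      have hle : bnum lam m a ≤ t := (hT _ hres).1 (bnum_mem lam m a)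
      have hres' : ((bnum lam m a + 1 : ℤ) : ZMod e) = I' := by
        rw [hcast1, hres, hI1]
      exact (hU _ hres').2 (by omega)
    have hRemE : ∀ a, a ∉ RemRows e m I lam := by
      intro a ha
      obtain ⟨hres, hnm⟩ := (hRem a).1 ha
      apply hnm
      have hle : bnum lam m a ≤ u := (hU _ hres).1 (bnum_mem lam m a)
      have hres' : ((bnum lam m a - 1 : ℤ) : ZMod e) = I := by
        rw [hcast2, hres, hI1]; ring
      exact (hT _ hres').2 (by omega)
    have hmu : ∀ a, mu.parts a = lam.parts a := fun a =>
      (hrem (fun ⟨a', ha'⟩ => hAddE a' ha') a).2 (hRemE a)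
    have hset : betaSet mu m = betaSet lam m := by
      unfold betaSet
      simp only [hmu]
    intro x
    rw [hset]
    unfold runnerSwap
    rw [← hIdef, ← hI'def]
    split_ifs with h1 h2
    · have hx1 : ((x + 1 : ℤ) : ZMod e) = I' := by rw [hcast1, h1, hI1]
      rw [hT x h1, hU _ hx1]
      omega
    · have hx1 : ((x - 1 : ℤ) : ZMod e) = I := by rw [hcast2, h2, hI1]; ring
      rw [hU x h2, hT _ hx1]
      omega
    · exact Iff.rfl
  · -- add case : t ≥ u + 1
    have htu : u + 1 ≤ t := by
      have h1 : (e : ℤ) ≤ (e : ℤ) * d := le_mul_of_one_le_right (by omega) (by omega)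
      linarith
    have hAddNe : (AddRows e m I lam).Nonempty := by
      obtain ⟨a, ha⟩ := (mem_bnum_iff lam m t).1 htmem
      refine ⟨a, (hAdd a).2 ⟨by rw [ha]; exact htI, ?_⟩⟩
      rw [ha]
      intro hmem
      have hres : ((t + 1 : ℤ) : ZMod e) = I' := by rw [hcast1, htI, hI1]
      have := (hU _ hres).1 hmem
      omega
    have hmu := hadd hAddNe
    have hMov : ∀ a, a ∈ AddRows e m I lam ↔
        ((bnum lam m a : ZMod e) = I ∧ u ≤ bnum lam m a) := by
      intro a
      rw [hAdd]
      constructor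
      · rintro ⟨hres1, h2⟩
        refine ⟨hres1, ?_⟩
        by_contra hlt
        push_neg at hlt
        apply h2
        have hres' : ((bnum lam m a + 1 : ℤ) : ZMod e) = I' := by
          rw [hcast1, hres1, hI1]
        exact (hU _ hres').2 (by omega)
      · rintro ⟨hres1, h2⟩
        refine ⟨hres1, fun hmem => ?_⟩
        have hres' : ((bnum lam m a + 1 : ℤ) : ZMod e) = I' := by
          rw [hcast1, hres1, hI1]
        have := (hU _ hres').1 hmem
        omega
    have hb' : ∀ a, (a ∈ AddRows e m I lam → bnum mu m a = bnum lam m a + 1) ∧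
        (a ∉ AddRows e m I lam → bnum mu m a = bnum lam m a) := by
      intro a
      obtain ⟨h1, h2⟩ := hmu a
      constructor
      · intro h
        have h3 := h1 h
        unfold bnum
        rw [h3]
        push_cast
        ring
      · intro h
        have h3 := h2 h
        unfold bnum
        rw [h3]
    intro x
    rw [mem_bnum_iff]
    unfold runnerSwap
    rw [← hIdef, ← hI'def]
    split_ifs with h1 h2
    · -- x ≡ I
      have hx1 : ((x + 1 : ℤ) : ZMod e) = I' := by rw [hcast1, h1, hI1]
      rw [hU _ hx1]
      constructor
      · rintro ⟨a, ha⟩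
        by_cases hA : a ∈ AddRows e m I lam
        · exfalso
          obtain ⟨hresa, -⟩ := (hMov a).1 hA
          have hxI' : (x : ZMod e) = I' := by
            rw [← ha, (hb' a).1 hA, hcast1, hresa, hI1]
          exact hII' (h1.symm.trans hxI')
        · have hba : bnum lam m a = x := by rw [← (hb' a).2 hA, ha]
          have hresa : (bnum lam m a : ZMod e) = I := by rw [hba]; exact h1
          have hlt : ¬ (u ≤ bnum lam m a) := by
            intro hge
            exact hA ((hMov a).2 ⟨hresa, hge⟩)
          omega
      · intro hxu
        have hxt : x ≤ t := by omega
        obtain ⟨a, ha⟩ := (mem_bnum_iff lam m x).1 ((hT x h1).2 hxt)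
        refine ⟨a, ?_⟩
        have hA : a ∉ AddRows e m I lam := by
          rw [hMov]
          rintro ⟨-, hge⟩
          omega
        rw [(hb' a).2 hA, ha]
    · -- x ≡ I'
      have hx1 : ((x - 1 : ℤ) : ZMod e) = I := by rw [hcast2, h2, hI1]; ring
      rw [hT _ hx1]
      constructor
      · rintro ⟨a, ha⟩
        by_cases hA : a ∈ AddRows e m I lam
        · obtain ⟨hresa, -⟩ := (hMov a).1 hA
          have hle : bnum lam m a ≤ t := (hT _ hresa).1 (bnum_mem lam m a)
          have hbm := (hb' a).1 hA
          omega
        · have hba : bnum lam m a = x := by rw [← (hb' a).2 hA, ha]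
          have hresa : (bnum lam m a : ZMod e) = I' := by rw [hba]; exact h2
          have hle : bnum lam m a ≤ u := (hU _ hresa).1 (bnum_mem lam m a)
          omega
      · intro hxt
        by_cases hxu : x ≤ u
        · obtain ⟨a, ha⟩ := (mem_bnum_iff lam m x).1 ((hU x h2).2 hxu)
          refine ⟨a, ?_⟩
          have hA : a ∉ AddRows e m I lam := by
            rw [hMov]
            rintro ⟨hresa, -⟩
            rw [ha] at hresa
            exact hII' (hresa.symm.trans h2)
          rw [(hb' a).2 hA, ha]
        · push_neg at hxu
          obtain ⟨a, ha⟩ := (mem_bnum_iff lam m (x - 1)).1 ((hT _ hx1).2 hxt)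
          refine ⟨a, ?_⟩
          have hA : a ∈ AddRows e m I lam :=
            (hMov a).2 ⟨by rw [ha]; exact hx1, by omega⟩
          rw [(hb' a).1 hA, ha]
          ring
    · -- other residues
      constructor
      · rintro ⟨a, ha⟩
        by_cases hA : a ∈ AddRows e m I lam
        · exfalso
          obtain ⟨hresa, -⟩ := (hMov a).1 hA
          apply h2
          rw [← ha, (hb' a).1 hA, hcast1, hresa, hI1]
        · exact (mem_bnum_iff lam m x).2 ⟨a, by rw [← (hb' a).2 hA, ha]⟩
      · intro hx
        obtain ⟨a, ha⟩ := (mem_bnum_iff lam m x).1 hx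
        refine ⟨a, ?_⟩
        have hA : a ∉ AddRows e m I lam := by
          rw [hMov]
          rintro ⟨hresa, -⟩
          rw [ha] at hresa
          exact h1 hresa
        rw [(hb' a).2 hA, ha]
end

section
/- The set of e-core partitions, realized inside the crystal B(Λ_m) of e-restricted partitions, is exactly the orbit of the empty partition under the affine Weyl group action defined by s_i λ = f̃_i^{max} λ if λ has no removable i-node, and s_i λ = ẽ_i^{max} λ if λ has no addable i-node (these operations applied to e-cores). Equivalently: every e-core is obtained from the empty partition by a finite sequence of operations 'add all addable i-nodes', and conversely each such sequence yields an e-core. -/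
/-- The operation "add all addable `i`-nodes", as a relation on partitions. -/
def AddAll (e : ℕ) (m : ℤ) (i : ZMod e) (l l' : SeqPartition) : Prop :=
  ∀ a, (a ∈ AddRows e m i l → l'.parts a = l.parts a + 1) ∧
       (a ∉ AddRows e m i l → l'.parts a = l.parts a)

namespace CoreProof

/-- beta number of row `a`. -/
def beta (l : SeqPartition) (m : ℤ) (a : ℕ) : ℤ := (l.parts a : ℤ) + m - a

lemma beta_eq (l : SeqPartition) (m : ℤ) (a : ℕ) :
    m + (l.parts a : ℤ) - a = beta l m a := by
  simp [beta]; ring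

lemma parts_anti (l : SeqPartition) : ∀ {a b : ℕ}, a ≤ b → l.parts b ≤ l.parts a := by
  intro a b h
  induction h with
  | refl => exact le_rfl
  | step h ih => exact le_trans (l.antitone _) ih

lemma beta_strictAnti (l : SeqPartition) (m : ℤ) : StrictAnti (beta l m) :=
  strictAnti_nat_of_succ_lt (fun n => by
    have := l.antitone n
    simp only [beta]
    push_cast
    omega)

lemma mem_betaSet {l : SeqPartition} {m x : ℤ} :
    x ∈ betaSet l m ↔ ∃ k, x = beta l m k := Iff.rfl

lemma beta_mem (l : SeqPartition) (m : ℤ) (a : ℕ) : beta l m a ∈ betaSet l m := ⟨a, rfl⟩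

lemma addable_iff (l : SeqPartition) (m : ℤ) (a : ℕ) :
    addableRow l a ↔ beta l m a + 1 ∉ betaSet l m := by
  have hsa := beta_strictAnti l m
  constructor
  · rintro (rfl | hlt) ⟨k, hk⟩
    · have h1 : beta l m k ≤ beta l m 0 := hsa.antitone (Nat.zero_le k)
      simp only [beta] at h1 hk
      omega
    · rcases a with _ | b
      · simp at hlt
      · have hlt' : l.parts (b+1) < l.parts b := by
          simpa using hlt
        rcases lt_trichotomy k (b+1) with h | rfl | h
        · have h1 : beta l m b ≤ beta l m k := hsa.antitone (by omega)
          simp only [beta] at h1 hk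
          push_cast at h1 hk
          omega
        · simp only [beta] at hk
          push_cast at hk
          omega
        · have h1 : beta l m k < beta l m (b+1) := hsa h
          simp only [beta] at h1 hk
          push_cast at h1 hk
          omega
  · intro h
    rcases a with _ | b
    · exact Or.inl rfl
    · by_contra hna
      have h1 : ¬ l.parts (b+1) < l.parts b := by
        intro hlt
        exact hna (Or.inr (by simpa using hlt))
      have h2 : l.parts (b+1) = l.parts b := le_antisymm (l.antitone b) (by omega)
      exact h ⟨b, by simp only [beta]; push_cast; omega⟩

lemma removable_iff (l : SeqPartition) (m : ℤ) (a : ℕ) :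
    removableRow l a ↔ beta l m a - 1 ∉ betaSet l m := by
  have hsa := beta_strictAnti l m
  constructor
  · intro hlt ⟨k, hk⟩
    rcases lt_trichotomy k (a+1) with h | rfl | h
    · have h1 : beta l m a ≤ beta l m k := hsa.antitone (by omega)
      simp only [beta] at h1 hk
      omega
    · have h2 : (l.parts (a+1) : ℤ) < l.parts a := by exact_mod_cast hlt
      simp only [beta] at hk
      push_cast at hk
      omega
    · have h1 : beta l m k < beta l m (a+1) := hsa h
      have h2 : (l.parts (a+1) : ℤ) < l.parts a := by exact_mod_cast hlt
      simp only [beta] at h1 hk ⊢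
      push_cast at h1 hk
      omega
  · intro h
    by_contra hna
    have h2 : l.parts (a+1) = l.parts a :=
      le_antisymm (l.antitone a) (by unfold removableRow at hna; omega)
    exact h ⟨a+1, by simp only [beta]; push_cast; omega⟩

lemma core_sub (e : ℕ) (l : SeqPartition) (m : ℤ)
    (hc : ∀ x ∈ betaSet l m, x - (e:ℤ) ∈ betaSet l m) :
    ∀ (k : ℕ) (x : ℤ), x ∈ betaSet l m → x - (e:ℤ) * k ∈ betaSet l m := by
  intro k
  induction k with
  | zero => intro x hx; simpa using hx
  | succ n ih =>
      intro x hx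
      have h1 := hc _ (ih x hx)
      push_cast
      have h2 : x - (e:ℤ) * ((n:ℤ)+1) = x - (e:ℤ) * n - e := by ring
      rw [h2]
      exact h1

lemma core_dvd_mem (e : ℕ) (he : 2 ≤ e) (l : SeqPartition) (m : ℤ)
    (hc : ∀ x ∈ betaSet l m, x - (e:ℤ) ∈ betaSet l m) {x y : ℤ}
    (hx : x ∈ betaSet l m) (hle : y ≤ x) (hdvd : (e:ℤ) ∣ x - y) :
    y ∈ betaSet l m := by
  obtain ⟨t, ht⟩ := hdvd
  have ht0 : 0 ≤ t := by nlinarith [ht, hle]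
  obtain ⟨k, rfl⟩ := Int.eq_ofNat_of_zero_le ht0
  have : y = x - (e:ℤ) * k := by omega
  rw [this]
  exact core_sub e l m hc k x hx

lemma cast_eq_dvd {e : ℕ} {x y : ℤ} (h : ((x : ℤ) : ZMod e) = (y : ZMod e)) :
    (e:ℤ) ∣ y - x :=
  Int.ModEq.dvd ((ZMod.intCast_eq_intCast_iff _ _ _).mp h)

lemma not_add_and_rem (e : ℕ) (he : 2 ≤ e) (m : ℤ) (i : ZMod e) (l : SeqPartition)
    (hc : ∀ x ∈ betaSet l m, x - (e:ℤ) ∈ betaSet l m) {a c : ℕ}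
    (ha : a ∈ AddRows e m i l) (hcr : c ∈ RemRows e m i l) : False := by
  obtain ⟨haRow, haRes⟩ := ha
  obtain ⟨hcRow, hcRes⟩ := hcr
  rw [beta_eq] at haRes
  have hcRes' : ((beta l m c - 1 : ℤ) : ZMod e) = i := by
    rw [← beta_eq]; rw [← hcRes]; ring_nf
  have h1 : beta l m a + 1 ∉ betaSet l m := (addable_iff l m a).mp haRow
  have h2 : beta l m c - 1 ∉ betaSet l m := (removable_iff l m c).mp hcRow
  have hdvd : (e:ℤ) ∣ (beta l m c - 1) - beta l m a :=
    cast_eq_dvd (haRes.trans hcRes'.symm)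
  rcases le_or_gt (beta l m c - 1) (beta l m a) with h | h
  · exact h2 (core_dvd_mem e he l m hc (beta_mem l m a) h (by
      obtain ⟨t, ht⟩ := hdvd; exact ⟨-t, by rw [mul_neg, ← ht]; ring⟩))
  · exact h1 (core_dvd_mem e he l m hc (beta_mem l m c) (by omega) (by
      obtain ⟨t, ht⟩ := hdvd; exact ⟨t, by omega⟩))


lemma addAll_core (e : ℕ) (he : 2 ≤ e) (m : ℤ) (i : ZMod e) (l l' : SeqPartition)
    (hc : ∀ x ∈ betaSet l m, x - (e:ℤ) ∈ betaSet l m)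
    (h : AddAll e m i l l') :
    ∀ x ∈ betaSet l' m, x - (e:ℤ) ∈ betaSet l' m := by
  classical
  haveI : Fact (1 < e) := ⟨by omega⟩
  have castE : ∀ x : ℤ, ((x - (e:ℤ) : ℤ) : ZMod e) = (x : ZMod e) := by
    intro x; push_cast; simp
  have key : ∀ a, (a ∈ AddRows e m i l ∧ beta l' m a = beta l m a + 1) ∨
      (a ∉ AddRows e m i l ∧ beta l' m a = beta l m a) := by
    intro a
    by_cases hA : a ∈ AddRows e m i l
    · left
      refine ⟨hA, ?_⟩
      have h1 := (h a).1 hA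
      simp only [beta, h1]
      push_cast
      ring
    · right
      refine ⟨hA, ?_⟩
      have h1 := (h a).2 hA
      simp only [beta, h1]
  intro x hx
  obtain ⟨a, rfl⟩ := hx
  rcases key a with ⟨hA, hβ⟩ | ⟨hA, hβ⟩
  · obtain ⟨haRow, haRes⟩ := hA
    rw [beta_eq] at haRes
    have h1 : beta l m a + 1 ∉ betaSet l m := (addable_iff l m a).mp haRow
    obtain ⟨c, hcEq⟩ := hc _ (beta_mem l m a)
    have hcEq' : beta l m a - e = beta l m c := hcEq
    by_cases hcJ : beta l m c + 1 ∈ betaSet l m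
    · obtain ⟨d, hdEq⟩ := hcJ
      have hdEq' : beta l m c + 1 = beta l m d := hdEq
      have hdA : d ∉ AddRows e m i l := by
        rintro ⟨hdRow, hdRes⟩
        rw [beta_eq] at hdRes
        have hval : beta l m d = beta l m a + 1 - e := by omega
        rw [hval] at hdRes
        rw [castE] at hdRes
        push_cast at hdRes
        rw [haRes] at hdRes
        exact one_ne_zero (add_eq_left.mp hdRes)
      rcases key d with ⟨h', _⟩ | ⟨_, hd'⟩
      · exact absurd h' hdA
      refine ⟨d, ?_⟩
      show beta l' m a - (e:ℤ) = beta l' m d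
      omega
    · have hcRow : addableRow l c := (addable_iff l m c).mpr hcJ
      have hcmem : c ∈ AddRows e m i l := by
        refine ⟨hcRow, ?_⟩
        rw [beta_eq, ← hcEq', castE]
        exact haRes
      rcases key c with ⟨_, hc'⟩ | ⟨h', _⟩
      · refine ⟨c, ?_⟩
        show beta l' m a - (e:ℤ) = beta l' m c
        omega
      · exact absurd hcmem h'
  · obtain ⟨c, hcEq⟩ := hc _ (beta_mem l m a)
    have hcEq' : beta l m a - e = beta l m c := hcEq
    by_cases hcA : c ∈ AddRows e m i l
    · obtain ⟨hcRow, hcRes⟩ := hcA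
      rw [beta_eq] at hcRes
      have haRes : ((beta l m a : ℤ) : ZMod e) = i := by
        rw [← castE (beta l m a), hcEq']
        exact hcRes
      have hnadd : ¬ addableRow l a := fun hrow => hA ⟨hrow, by rw [beta_eq]; exact haRes⟩
      have h1 : beta l m a + 1 ∈ betaSet l m := by
        by_contra hn
        exact hnadd ((addable_iff l m a).mpr hn)
      have h2 := hc _ h1
      have h3 : beta l m c + 1 ∈ betaSet l m := by
        have hval : beta l m c + 1 = beta l m a + 1 - e := by omega
        rw [hval]
        exact h2
      exact absurd h3 ((addable_iff l m c).mp hcRow)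
    · rcases key c with ⟨h', _⟩ | ⟨_, hc'⟩
      · exact absurd h' hcA
      refine ⟨c, ?_⟩
      show beta l' m a - (e:ℤ) = beta l' m c
      omega


lemma beta_eq' (l : SeqPartition) (m : ℤ) (a : ℕ) :
    m + (l.parts a : ℤ) - 1 - a = beta l m a - 1 := by
  simp [beta]; ring

open Classical in
noncomputable def removeAllP (e : ℕ) (m : ℤ) (i : ZMod e) (l : SeqPartition) : SeqPartition where
  parts a := if a ∈ RemRows e m i l then l.parts a - 1 else l.parts a
  antitone := by
    intro k
    have hk := l.antitone k
    by_cases h2 : k + 1 ∈ RemRows e m i l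
    · rw [if_pos h2]
      by_cases h : k ∈ RemRows e m i l
      · rw [if_pos h]
        have h1 : l.parts (k+1) < l.parts k := h.1
        omega
      · rw [if_neg h]; omega
    · rw [if_neg h2]
      by_cases h : k ∈ RemRows e m i l
      · rw [if_pos h]
        have h1 : l.parts (k+1) < l.parts k := h.1
        omega
      · rw [if_neg h]; exact hk
  eventually_zero := by
    obtain ⟨N, hN⟩ := l.eventually_zero
    refine ⟨N, fun k hk => ?_⟩
    by_cases h : k ∈ RemRows e m i l
    · rw [if_pos h, hN k hk]
    · rw [if_neg h]; exact hN k hk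

lemma removeAllP_mem {e : ℕ} {m : ℤ} {i : ZMod e} {l : SeqPartition} {a : ℕ}
    (h : a ∈ RemRows e m i l) :
    (removeAllP e m i l).parts a = l.parts a - 1 := by
  simp only [removeAllP]
  rw [if_pos h]

lemma removeAllP_not_mem {e : ℕ} {m : ℤ} {i : ZMod e} {l : SeqPartition} {a : ℕ}
    (h : a ∉ RemRows e m i l) :
    (removeAllP e m i l).parts a = l.parts a := by
  simp only [removeAllP]
  rw [if_neg h]

lemma addRows_removeAllP (e : ℕ) (he : 2 ≤ e) (m : ℤ) (i : ZMod e) (l : SeqPartition)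
    (hc : ∀ x ∈ betaSet l m, x - (e:ℤ) ∈ betaSet l m) (c₀ : ℕ)
    (hc₀ : c₀ ∈ RemRows e m i l) :
    AddRows e m i (removeAllP e m i l) = RemRows e m i l := by
  ext a
  constructor
  · intro ha
    by_contra hnR
    obtain ⟨haRow, haRes⟩ := ha
    have hpa : (removeAllP e m i l).parts a = l.parts a := removeAllP_not_mem hnR
    have haRow' : addableRow l a := by
      rcases haRow with h | hlt
      · exact Or.inl h
      · right
        rw [hpa] at hlt
        refine lt_of_lt_of_le hlt ?_
        by_cases h : (a-1) ∈ RemRows e m i l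
        · rw [removeAllP_mem h]; omega
        · rw [removeAllP_not_mem h]
    rw [hpa] at haRes
    exact not_add_and_rem e he m i l hc ⟨haRow', haRes⟩ hc₀
  · intro hR
    have hp1 : l.parts (a+1) < l.parts a := hR.1
    refine ⟨?_, ?_⟩
    · rcases Nat.eq_zero_or_pos a with rfl | hpos
      · exact Or.inl rfl
      · right
        obtain ⟨b, rfl⟩ : ∃ b, a = b + 1 := ⟨a - 1, by omega⟩
        rw [removeAllP_mem hR]
        simp only [Nat.add_sub_cancel]
        have hab : l.parts (b+1) ≤ l.parts b := l.antitone b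
        by_cases h : b ∈ RemRows e m i l
        · rw [removeAllP_mem h]
          have h1 : l.parts (b+1) < l.parts b := h.1
          omega
        · rw [removeAllP_not_mem h]
          omega
    · rw [removeAllP_mem hR]
      have h1 : 1 ≤ l.parts a := by omega
      have h2 : ((l.parts a - 1 : ℕ) : ℤ) = (l.parts a : ℤ) - 1 := by omega
      rw [h2]
      have heq : m + ((l.parts a : ℤ) - 1) - a = m + (l.parts a : ℤ) - 1 - a := by ring
      rw [heq]
      exact hR.2

lemma addAll_removeAllP (e : ℕ) (he : 2 ≤ e) (m : ℤ) (i : ZMod e) (l : SeqPartition)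
    (hc : ∀ x ∈ betaSet l m, x - (e:ℤ) ∈ betaSet l m) (c₀ : ℕ)
    (hc₀ : c₀ ∈ RemRows e m i l) :
    AddAll e m i (removeAllP e m i l) l := by
  intro a
  rw [addRows_removeAllP e he m i l hc c₀ hc₀]
  constructor
  · intro h
    rw [removeAllP_mem h]
    have h1 : l.parts (a+1) < l.parts a := h.1
    omega
  · intro h
    rw [removeAllP_not_mem h]


lemma removeAllP_core (e : ℕ) (he : 2 ≤ e) (m : ℤ) (i : ZMod e) (l : SeqPartition)
    (hc : ∀ x ∈ betaSet l m, x - (e:ℤ) ∈ betaSet l m) :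
    ∀ x ∈ betaSet (removeAllP e m i l) m, x - (e:ℤ) ∈ betaSet (removeAllP e m i l) m := by
  classical
  haveI : Fact (1 < e) := ⟨by omega⟩
  set l'' := removeAllP e m i l with hl''
  have castE : ∀ x : ℤ, ((x - (e:ℤ) : ℤ) : ZMod e) = (x : ZMod e) := by
    intro x; push_cast; simp
  have key : ∀ a, (a ∈ RemRows e m i l ∧ beta l'' m a = beta l m a - 1) ∨
      (a ∉ RemRows e m i l ∧ beta l'' m a = beta l m a) := by
    intro a
    by_cases hR : a ∈ RemRows e m i l
    · left
      refine ⟨hR, ?_⟩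
      have h1 : l.parts (a+1) < l.parts a := hR.1
      have hp : l''.parts a = l.parts a - 1 := by rw [hl'']; exact removeAllP_mem hR
      simp only [beta, hp]
      omega
    · right
      refine ⟨hR, ?_⟩
      have hp : l''.parts a = l.parts a := by rw [hl'']; exact removeAllP_not_mem hR
      simp only [beta, hp]
  intro x hx
  obtain ⟨a, rfl⟩ := hx
  rcases key a with ⟨hR, hβ⟩ | ⟨hR, hβ⟩
  · have hrRow : removableRow l a := hR.1
    have hrRes : ((beta l m a - 1 : ℤ) : ZMod e) = i := by
      rw [← beta_eq']; exact hR.2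
    obtain ⟨c, hcEq⟩ := hc _ (beta_mem l m a)
    have hcEq' : beta l m a - e = beta l m c := hcEq
    by_cases hcJ : beta l m c - 1 ∈ betaSet l m
    · obtain ⟨d, hdEq⟩ := hcJ
      have hdEq' : beta l m c - 1 = beta l m d := hdEq
      have hdR : d ∉ RemRows e m i l := by
        rintro ⟨hdRow, hdRes⟩
        have hdRes' : ((beta l m d - 1 : ℤ) : ZMod e) = i := by
          rw [← beta_eq']; exact hdRes
        have hval : beta l m d - 1 = (beta l m a - 1) - 1 - e := by omega
        rw [hval, castE] at hdRes'
        push_cast at hdRes' hrRes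
        have h10 : (1 : ZMod e) = 0 := by linear_combination hrRes - hdRes'
        exact one_ne_zero h10
      rcases key d with ⟨h', _⟩ | ⟨_, hd'⟩
      · exact absurd h' hdR
      refine ⟨d, ?_⟩
      show beta l'' m a - (e:ℤ) = beta l'' m d
      omega
    · have hcRow : removableRow l c := (removable_iff l m c).mpr hcJ
      have hcR : c ∈ RemRows e m i l := by
        refine ⟨hcRow, ?_⟩
        rw [beta_eq']
        have hval : beta l m c - 1 = (beta l m a - 1) - e := by omega
        rw [hval, castE]
        exact hrRes
      rcases key c with ⟨_, hc'⟩ | ⟨h', _⟩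
      · refine ⟨c, ?_⟩
        show beta l'' m a - (e:ℤ) = beta l'' m c
        omega
      · exact absurd hcR h'
  · obtain ⟨c, hcEq⟩ := hc _ (beta_mem l m a)
    have hcEq' : beta l m a - e = beta l m c := hcEq
    by_cases hcR : c ∈ RemRows e m i l
    · have hcRow : removableRow l c := hcR.1
      have hcRes : ((beta l m c - 1 : ℤ) : ZMod e) = i := by
        rw [← beta_eq']; exact hcR.2
      have haRes : ((m + (l.parts a : ℤ) - 1 - a : ℤ) : ZMod e) = i := by
        rw [beta_eq']
        rw [← castE (beta l m a - 1)]
        have hval : beta l m a - 1 - e = beta l m c - 1 := by omega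
        rw [hval]
        exact hcRes
      have hnrem : ¬ removableRow l a := fun hr => hR ⟨hr, haRes⟩
      have h1 : beta l m a - 1 ∈ betaSet l m := by
        by_contra hn
        exact hnrem ((removable_iff l m a).mpr hn)
      have h2 := hc _ h1
      have h3 : beta l m c - 1 ∈ betaSet l m := by
        have hval : beta l m c - 1 = beta l m a - 1 - e := by omega
        rw [hval]
        exact h2
      exact absurd h3 ((removable_iff l m c).mp hcRow)
    · rcases key c with ⟨h', _⟩ | ⟨_, hc'⟩
      · exact absurd h' hcR
      refine ⟨c, ?_⟩
      show beta l'' m a - (e:ℤ) = beta l'' m c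
      omega

lemma zero_core (e : ℕ) (m : ℤ) (l : SeqPartition) (h0 : ∀ k, l.parts k = 0) :
    ∀ x ∈ betaSet l m, x - (e:ℤ) ∈ betaSet l m := by
  rintro x ⟨k, rfl⟩
  refine ⟨k + e, ?_⟩
  simp only [h0]
  push_cast
  ring


lemma all_zero_case (e : ℕ) (m : ℤ) (lam : SeqPartition) (hz : ∀ k, lam.parts k = 0) :
    ∃ (N : ℕ) (f : ℕ → SeqPartition) (res : ℕ → ZMod e),
      (∀ k, (f 0).parts k = 0) ∧ f N = lam ∧
      ∀ k < N, AddAll e m (res k) (f k) (f (k + 1)) :=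
  ⟨0, fun _ => lam, fun _ => 0, hz, rfl, by omega⟩

lemma forward_aux (e : ℕ) (he : 2 ≤ e) (m : ℤ) :
    ∀ (n : ℕ) (lam : SeqPartition),
      (∀ x ∈ betaSet lam m, x - (e:ℤ) ∈ betaSet lam m) →
      (∃ N : ℕ, (∀ k, N ≤ k → lam.parts k = 0) ∧ ∑ k ∈ Finset.range N, lam.parts k ≤ n) →
      ∃ (N : ℕ) (f : ℕ → SeqPartition) (res : ℕ → ZMod e),
        (∀ k, (f 0).parts k = 0) ∧ f N = lam ∧
        ∀ k < N, AddAll e m (res k) (f k) (f (k + 1)) := by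
  intro n
  induction n with
  | zero =>
      rintro lam hcore ⟨N, hNz, hsum⟩
      refine all_zero_case e m lam ?_
      intro k
      rcases le_or_gt N k with h | h
      · exact hNz k h
      · exact Finset.sum_eq_zero_iff.mp (Nat.le_zero.mp hsum) k (Finset.mem_range.mpr h)
  | succ n ih =>
      rintro lam hcore ⟨N, hNz, hsum⟩
      by_cases h0 : lam.parts 0 = 0
      · refine all_zero_case e m lam ?_
        intro k
        have := parts_anti lam (Nat.zero_le k)
        omega
      · have hex : ∃ t, lam.parts t = 0 := ⟨N, hNz N le_rfl⟩
        set n₀ := Nat.find hex with hn₀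
        have hfz : lam.parts n₀ = 0 := by rw [hn₀]; exact Nat.find_spec hex
        have hpos : 0 < n₀ := by
          rcases Nat.eq_zero_or_pos n₀ with h | h
          · rw [h] at hfz; exact absurd hfz h0
          · exact h
        set a₀ := n₀ - 1 with ha₀
        have ha₀n : lam.parts a₀ ≠ 0 := Nat.find_min hex (by omega)
        have hrem : removableRow lam a₀ := by
          show lam.parts (a₀ + 1) < lam.parts a₀
          have h1 : a₀ + 1 = n₀ := by omega
          rw [h1, hfz]
          omega
        set i : ZMod e := ((m + (lam.parts a₀ : ℤ) - 1 - a₀ : ℤ) : ZMod e) with hi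
        have hc₀ : a₀ ∈ RemRows e m i lam := ⟨hrem, rfl⟩
        have hcore'' := removeAllP_core e he m i lam hcore
        have haddall := addAll_removeAllP e he m i lam hcore a₀ hc₀
        have hN'' : ∀ k, N ≤ k → (removeAllP e m i lam).parts k = 0 := by
          intro k hk
          by_cases h : k ∈ RemRows e m i lam
          · rw [removeAllP_mem h, hNz k hk]
          · rw [removeAllP_not_mem h]; exact hNz k hk
        have hsum'' : ∑ k ∈ Finset.range N, (removeAllP e m i lam).parts k ≤ n := by
          have hlt : ∑ k ∈ Finset.range N, (removeAllP e m i lam).parts k <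
              ∑ k ∈ Finset.range N, lam.parts k := by
            apply Finset.sum_lt_sum
            · intro k _
              by_cases h : k ∈ RemRows e m i lam
              · rw [removeAllP_mem h]; omega
              · rw [removeAllP_not_mem h]
            · refine ⟨a₀, Finset.mem_range.mpr ?_, ?_⟩
              · by_contra h
                exact ha₀n (hNz a₀ (by omega))
              · rw [removeAllP_mem hc₀]
                omega
          omega
        obtain ⟨N', f, res, hf0, hfN, hstep⟩ :=
          ih (removeAllP e m i lam) hcore'' ⟨N, hN'', hsum''⟩
        refine ⟨N' + 1, fun k => if k < N' + 1 then f k else lam,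
          fun k => if k < N' then res k else i, ?_, ?_, ?_⟩
        · intro k
          simp only [if_pos (Nat.succ_pos N')]
          exact hf0 k
        · show (if N' + 1 < N' + 1 then f (N' + 1) else lam) = lam
          rw [if_neg (lt_irrefl (N' + 1))]
        · intro k hk
          rcases Nat.lt_or_ge k N' with h | h
          · simp only [if_pos (by omega : k < N' + 1), if_pos (by omega : k + 1 < N' + 1),
              if_pos h]
            exact hstep k h
          · have hk' : k = N' := by omega
            simp only [if_pos (by omega : k < N' + 1), if_neg (by omega : ¬ k + 1 < N' + 1),
              if_neg (by omega : ¬ k < N')]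
            rw [hk', hfN]
            exact haddall

end CoreProof

/-- Proposition 3.4: the `e`-cores in `B(Λ_m)` form exactly the `W`-orbit of
the empty partition: a partition is an `e`-core if and only if it is obtained
from the empty partition by a finite sequence of operations
"add all addable `i`-nodes". -/


theorem core_iff_orbit_of_empty (e : ℕ) (he : 2 ≤ e) (m : ℤ) (lam : SeqPartition) :
    (∀ x ∈ betaSet lam m, x - (e : ℤ) ∈ betaSet lam m) ↔
    ∃ (N : ℕ) (f : ℕ → SeqPartition) (res : ℕ → ZMod e),
      (∀ k, (f 0).parts k = 0) ∧ f N = lam ∧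
      ∀ k < N, AddAll e m (res k) (f k) (f (k + 1)) := by
  constructor
  · intro hcore
    obtain ⟨N, hN⟩ := lam.eventually_zero
    exact CoreProof.forward_aux e he m (∑ k ∈ Finset.range N, lam.parts k) lam hcore
      ⟨N, hN, le_rfl⟩
  · rintro ⟨N, f, res, h0, rfl, hstep⟩
    have hall : ∀ k, k ≤ N → ∀ x ∈ betaSet (f k) m, x - (e:ℤ) ∈ betaSet (f k) m := by
      intro k
      induction k with
      | zero => exact fun _ => CoreProof.zero_core e m (f 0) h0
      | succ k ihk =>
          intro hk
          exact CoreProof.addAll_core e he m (res k) (f k) (f (k+1))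
            (ihk (by omega)) (hstep k (by omega))
    exact hall N le_rfl
end

section
/- Every 3-core partition has the form (c, c-2, ..., c-2r+2, d, d, d-1, d-1, ..., 1, 1) where d = c - 2r or d = c - 2r + 1 (with r ≥ 0 parts in the first block); consequently, a 3-core is uniquely determined by the pair (a(λ), ℓ(λ)) of its largest part and number of parts, via r = -⌊(ℓ(λ) - 2a(λ))/3⌋ and d = ⌊(2ℓ(λ) - a(λ))/3⌋. -/
/-- The number of nonzero parts of a partition. -/
noncomputable def plength (l : SeqPartition) : ℕ := Set.ncard {j : ℕ | l.parts j ≠ 0}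

lemma parts_anti (lam : SeqPartition) : Antitone lam.parts :=
  antitone_nat_of_succ_le lam.antitone

lemma step4 (lam : SeqPartition)
    (hcore : ∀ x ∈ betaSet lam 0, x - 3 ∈ betaSet lam 0) (k : ℕ) :
    lam.parts k = lam.parts (k+1) + 2 ∨
    (lam.parts k = lam.parts (k+1) + 1 ∧ lam.parts (k+1) = lam.parts (k+2)) ∨
    (lam.parts k = lam.parts (k+1) ∧ lam.parts (k+1) = lam.parts (k+2) + 1) ∨
    (lam.parts k = lam.parts (k+1) ∧ lam.parts (k+1) = lam.parts (k+2) ∧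
      lam.parts (k+2) = lam.parts (k+3)) := by
  obtain ⟨j, hj⟩ := hcore _ ⟨k, rfl⟩
  have h01 := lam.antitone k
  have h12 : lam.parts (k+2) ≤ lam.parts (k+1) := lam.antitone (k+1)
  have h23 : lam.parts (k+3) ≤ lam.parts (k+2) := lam.antitone (k+2)
  have hanti := parts_anti lam
  have hk : k < j := by
    by_contra h
    have h2 := hanti (not_lt.mp h)
    omega
  have hjk := hanti hk.le
  have hk3 : j ≤ k + 3 := by omega
  rcases (show j = k+1 ∨ j = k+2 ∨ j = k+3 by omega) with rfl | rfl | rfl <;> omega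

lemma flat_all (lam : SeqPartition)
    (hcore : ∀ x ∈ betaSet lam 0, x - 3 ∈ betaSet lam 0) (k : ℕ)
    (h1 : lam.parts k = lam.parts (k+1)) (h2 : lam.parts (k+1) = lam.parts (k+2)) :
    ∀ n, lam.parts (k + n) = lam.parts k := by
  have key : ∀ n, lam.parts (k+n) = lam.parts k ∧ lam.parts (k+n+1) = lam.parts k ∧
      lam.parts (k+n+2) = lam.parts k := by
    intro n
    induction n with
    | zero =>
      refine ⟨by rw [Nat.add_zero], ?_, ?_⟩
      · have e : k + 0 + 1 = k + 1 := by omega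
        rw [e]; omega
      · have e : k + 0 + 2 = k + 2 := by omega
        rw [e]; omega
    | succ n ih =>
      have st := step4 lam hcore (k+n)
      have e1 : k + (n+1) = k + n + 1 := by omega
      have e2 : k + (n+1) + 1 = k + n + 2 := by omega
      have e3 : k + (n+1) + 2 = k + n + 3 := by omega
      rw [e3, e2, e1]
      rcases st with h | h | h | h <;> omega

  intro n; exact (key n).1

lemma flat_zero (lam : SeqPartition)
    (hcore : ∀ x ∈ betaSet lam 0, x - 3 ∈ betaSet lam 0) (k : ℕ)
    (h1 : lam.parts k = lam.parts (k+1)) (h2 : lam.parts (k+1) = lam.parts (k+2)) :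
    lam.parts k = 0 := by
  obtain ⟨N, hN⟩ := lam.eventually_zero
  have ha := flat_all lam hcore k h1 h2 N
  have hb := hN (k + N) (by omega)
  omega

lemma stair (lam : SeqPartition)
    (hcore : ∀ x ∈ betaSet lam 0, x - 3 ∈ betaSet lam 0) (r : ℕ)
    (hflat : lam.parts r = lam.parts (r+1)) :
    ∀ i, i ≤ lam.parts r → lam.parts (r + 2*i) = lam.parts r - i ∧
      lam.parts (r + 2*i + 1) = lam.parts r - i := by
  intro i
  induction i with
  | zero =>
    intro _
    constructor
    · have e : r + 2*0 = r := by omega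
      rw [e]; omega
    · have e : r + 2*0 + 1 = r + 1 := by omega
      rw [e]; omega
  | succ i ih =>
    intro hle
    have hi := ih (by omega)
    have st := step4 lam hcore (r + 2*i)
    have e1 : r + 2*i + 1 + 1 = r + 2*i + 2 := by omega
    have e2 : r + 2*i + 1 + 2 = r + 2*i + 3 := by omega
    have e3 : r + 2*i + 1 + 3 = r + 2*i + 4 := by omega
    have g1 : r + 2*(i+1) = r + 2*i + 2 := by omega
    have g2 : r + 2*(i+1) + 1 = r + 2*i + 3 := by omega
    rw [g2, g1]
    rcases st with h | h | h | h
    · omega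
    · omega
    · have st2 := step4 lam hcore (r + 2*i + 1)
      rw [e1, e2, e3] at st2
      rcases st2 with h2 | h2 | h2 | h2 <;> omega
    · exfalso
      have h0 := flat_zero lam hcore (r + 2*i) h.1 h.2.1
      omega

lemma assemble (lam : SeqPartition)
    (hcore : ∀ x ∈ betaSet lam 0, x - 3 ∈ betaSet lam 0) (r d : ℕ)
    (hflat : lam.parts r = lam.parts (r+1)) (hd : d = lam.parts r)
    (hlead : ∀ k < r, lam.parts 0 = lam.parts k + 2*k)
    (hpos : ∀ j < r, lam.parts j ≠ 0) :
    (∀ k < r, lam.parts k = lam.parts 0 - 2 * k) ∧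
    (∀ t < 2 * d, lam.parts (r + t) = d - t / 2) ∧
    (∀ k, r + 2 * d ≤ k → lam.parts k = 0) ∧
    plength lam = r + 2 * d := by
  subst hd
  have C := stair lam hcore r hflat
  set d := lam.parts r with hd
  have h2 : ∀ t < 2 * d, lam.parts (r + t) = d - t / 2 := by
    intro t ht
    obtain ⟨i, hi⟩ : ∃ i, t = 2*i ∨ t = 2*i + 1 := ⟨t/2, by omega⟩
    have hC := C i (by omega)
    rcases hi with rfl | rfl
    · have e : (2*i)/2 = i := by omega
      rw [e]; exact hC.1
    · have e : (2*i+1)/2 = i := by omega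
      rw [e]
      have e2 : r + (2*i+1) = r + 2*i + 1 := by omega
      rw [e2]; exact hC.2
  have hz0 : lam.parts (r + 2*d) = 0 := by
    have := (C d le_rfl).1
    omega
  have hzero : ∀ k, r + 2 * d ≤ k → lam.parts k = 0 := by
    intro k hk
    have := parts_anti lam hk
    omega
  refine ⟨fun k hk => by have := hlead k hk; omega, h2, hzero, ?_⟩
  have hset : {j : ℕ | lam.parts j ≠ 0} = ↑(Finset.range (r + 2*d)) := by
    ext j
    simp only [Set.mem_setOf_eq, Finset.coe_range, Set.mem_Iio]
    constructor
    · intro hne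
      by_contra hge
      exact hne (hzero j (by omega))
    · intro hlt
      rcases lt_or_ge j r with hj | hj
      · exact hpos j hj
      · have ht := h2 (j - r) (by omega)
        have e : r + (j - r) = j := by omega
        rw [e] at ht
        have : (j - r)/2 < d := by omega
        omega
  unfold plength
  rw [hset, Set.ncard_coe_finset, Finset.card_range]

lemma shape (lam : SeqPartition)
    (hcore : ∀ x ∈ betaSet lam 0, x - 3 ∈ betaSet lam 0) :
    ∃ r d : ℕ,
      ((d : ℤ) = (lam.parts 0 : ℤ) - 2 * r ∨
        (d : ℤ) = (lam.parts 0 : ℤ) - 2 * r + 1) ∧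
      (∀ k < r, lam.parts k = lam.parts 0 - 2 * k) ∧
      (∀ t < 2 * d, lam.parts (r + t) = d - t / 2) ∧
      (∀ k, r + 2 * d ≤ k → lam.parts k = 0) ∧
      plength lam = r + 2 * d := by
  have hm : ∃ k, ¬ (lam.parts k = lam.parts (k+1) + 2) := by
    by_contra h
    push_neg at h
    have grow : ∀ k, lam.parts 0 = lam.parts k + 2*k := by
      intro k
      induction k with
      | zero => omega
      | succ k ih => have := h k; omega
    obtain ⟨N, hN⟩ := lam.eventually_zero
    have g1 := grow (N + lam.parts 0 + 1)
    have z := hN (N + lam.parts 0 + 1) (by omega)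
    omega
  set m := Nat.find hm with hmdef
  have hm2 := Nat.find_spec hm
  have hstep : ∀ k < m, lam.parts k = lam.parts (k+1) + 2 := by
    intro k hk
    have := Nat.find_min hm hk
    omega
  have hlead0 : ∀ k ≤ m, lam.parts 0 = lam.parts k + 2*k := by
    intro k
    induction k with
    | zero => intro _; omega
    | succ k ih =>
      intro h
      have h1 := ih (by omega)
      have h2 := hstep k (by omega)
      omega
  rcases step4 lam hcore m with h | h | h | h
  · exact absurd h hm2
  · -- r = m+1, d = parts (m+1), c = 2r + d - 1
    refine ⟨m+1, lam.parts (m+1), ?_, ?_⟩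
    · right
      have := hlead0 m le_rfl
      push_cast
      omega
    have hflat : lam.parts (m+1) = lam.parts (m+1+1) := by
      have e : m+1+1 = m+2 := by omega
      rw [e]; exact h.2
    have hlead : ∀ k < m+1, lam.parts 0 = lam.parts k + 2*k := fun k hk => hlead0 k (by omega)
    have hpos : ∀ j < m+1, lam.parts j ≠ 0 := by
      intro j hj
      have h1 := hlead0 j (by omega)
      have h2 := hlead0 m le_rfl
      omega
    exact assemble lam hcore (m+1) (lam.parts (m+1)) hflat rfl hlead hpos
  · -- r = m, d = parts m
    refine ⟨m, lam.parts m, ?_, ?_⟩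
    · left
      have := hlead0 m le_rfl
      omega
    have hpos : ∀ j < m, lam.parts j ≠ 0 := by
      intro j hj
      have h1 := hlead0 j (by omega)
      have h2 := hlead0 m le_rfl
      have h3 := hstep j hj
      omega
    exact assemble lam hcore m (lam.parts m) h.1 rfl (fun k hk => hlead0 k (by omega)) hpos
  · refine ⟨m, lam.parts m, ?_, ?_⟩
    · left
      have := hlead0 m le_rfl
      omega
    have hpos : ∀ j < m, lam.parts j ≠ 0 := by
      intro j hj
      have h1 := hlead0 j (by omega)
      have h2 := hlead0 m le_rfl
      have h3 := hstep j hj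
      omega
    exact assemble lam hcore m (lam.parts m) h.1 rfl (fun k hk => hlead0 k (by omega)) hpos


/-- Every 3-core has the form
`(c, c-2, …, c-2r+2, d, d, d-1, d-1, …, 1, 1)` with `d = c - 2r` or
`d = c - 2r + 1`, and is uniquely determined by its largest part `c = a(λ)`
and number of parts `ℓ(λ)` via `r = -⌊(ℓ - 2c)/3⌋` and `d = ⌊(2ℓ - c)/3⌋`. -/
theorem three_core_shape (lam : SeqPartition)
    (hcore : ∀ x ∈ betaSet lam 0, x - 3 ∈ betaSet lam 0) :
    (∃ r d : ℕ,
      ((d : ℤ) = (lam.parts 0 : ℤ) - 2 * r ∨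
        (d : ℤ) = (lam.parts 0 : ℤ) - 2 * r + 1) ∧
      (∀ k < r, lam.parts k = lam.parts 0 - 2 * k) ∧
      (∀ t < 2 * d, lam.parts (r + t) = d - t / 2) ∧
      (∀ k, r + 2 * d ≤ k → lam.parts k = 0) ∧
      (r : ℤ) = -(((plength lam : ℤ) - 2 * (lam.parts 0 : ℤ)).fdiv 3) ∧
      (d : ℤ) = (2 * (plength lam : ℤ) - (lam.parts 0 : ℤ)).fdiv 3) ∧
    ∀ mu : SeqPartition, (∀ x ∈ betaSet mu 0, x - 3 ∈ betaSet mu 0) →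
      mu.parts 0 = lam.parts 0 → plength mu = plength lam →
      ∀ k, mu.parts k = lam.parts k := by
  obtain ⟨r, d, hcd, h1, h2, h3, hlen⟩ := shape lam hcore
  constructor
  · refine ⟨r, d, hcd, h1, h2, h3, ?_, ?_⟩
    · rw [Int.fdiv_eq_ediv_of_nonneg _ (by norm_num : (0:ℤ) ≤ 3)]
      omega
    · rw [Int.fdiv_eq_ediv_of_nonneg _ (by norm_num : (0:ℤ) ≤ 3)]
      omega
  · intro mu hmu hc0 hlenmu
    obtain ⟨r', d', hcd', h1', h2', h3', hlen'⟩ := shape mu hmu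
    obtain ⟨hr, hd⟩ : r' = r ∧ d' = d := by omega
    rw [hr] at h1' h2' h3'
    rw [hd] at h2' h3'
    intro k
    rcases lt_or_ge k r with hk | hk
    · have a1 := h1 k hk
      have a2 := h1' k hk
      omega
    · rcases lt_or_ge k (r + 2*d) with hk2 | hk2
      · have a1 := h2 (k - r) (by omega)
        have a2 := h2' (k - r) (by omega)
        have e : r + (k - r) = k := by omega
        rw [e] at a1 a2
        omega
      · rw [h3 k (by omega), h3' k (by omega)]
end

section
/- Let λ be an e-core with beta numbers J of charge 0, and for 1 ≤ i ≤ e let M_i(λ) = max{x ∈ J : x ≡ i (mod e)} and N_i(λ) the number of nodes of λ of residue i (contents taken mod e, with N_e = N_0). Then (N_{i-1}(λ) - N_i(λ))·e + i = M_i(λ) + e for all 1 ≤ i ≤ e. -/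
open Finset


/-- The number of nodes of `l` of residue `j` modulo `e` (the node in
0-indexed row `a`, column `b` has content `b - a`). -/
noncomputable def resCount (e : ℕ) (l : SeqPartition) (j : ℕ) : ℕ :=
  Set.ncard {pr : ℕ × ℕ | pr.2 < l.parts pr.1 ∧
    (((pr.2 : ℤ) - (pr.1 : ℤ)) : ZMod e) = (j : ZMod e)}

lemma zmod_int_iff (e : ℕ) (a c : ℤ) : ((a : ZMod e) = (c : ZMod e)) ↔ (e:ℤ) ∣ c - a := by
  rw [ZMod.intCast_eq_intCast_iff, Int.modEq_iff_dvd]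

lemma cond_dvd (e j b k : ℕ) :
    ((((b : ℤ) - (k : ℤ)) : ZMod e) = (j : ZMod e)) ↔ (e:ℤ) ∣ (j:ℤ) - (b:ℤ) + (k:ℤ) := by
  have h1 : ((((b:ℕ):ℤ) - ((k:ℕ):ℤ)) : ZMod e) = ((((b:ℕ):ℤ) - ((k:ℕ):ℤ) : ℤ) : ZMod e) := by
    push_cast; ring
  have h2 : ((j:ℕ) : ZMod e) = (((j:ℤ)) : ZMod e) := by push_cast; ring
  rw [h1, h2, zmod_int_iff,
    show (j:ℤ) - ((b:ℤ) - (k:ℤ)) = (j:ℤ) - (b:ℤ) + (k:ℤ) from by ring]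

lemma count_shift (q : ℕ → Prop) [DecidablePred q] (n : ℕ)
    (p : ℕ → Prop) [DecidablePred p] (hpq : ∀ b, p b ↔ q (b+1)) :
    ((range n).filter p).card + (if q 0 then 1 else 0)
    = ((range n).filter q).card + (if q n then 1 else 0) := by
  have h1 : ((range n).filter p).card = ((Ico 1 (n+1)).filter q).card := by
    apply Finset.card_bij (fun b _ => b + 1)
    · intro a ha
      simp only [mem_filter, mem_range] at ha
      simp only [mem_filter, mem_Ico]
      exact ⟨⟨by omega, by omega⟩, (hpq a).1 ha.2⟩
    · intro a _ b _ h; omega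
    · intro b hb
      simp only [mem_filter, mem_Ico] at hb
      refine ⟨b - 1, ?_, by omega⟩
      simp only [mem_filter, mem_range]
      refine ⟨by omega, ?_⟩
      rw [hpq, show b - 1 + 1 = b by omega]; exact hb.2
  have h2 : ((range (n+1)).filter q).card = ((range n).filter q).card + (if q n then 1 else 0) := by
    rw [Finset.range_add_one, Finset.filter_insert]
    split <;> simp [Finset.card_insert_of_notMem, Finset.notMem_range_self]
  have h3 : ((range (n+1)).filter q).card = ((Ico 1 (n+1)).filter q).card + (if q 0 then 1 else 0) := by
    have hins : range (n+1) = insert 0 (Ico 1 (n+1)) := by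
      ext x; simp only [Finset.mem_Ico, Finset.mem_range, Finset.mem_insert]; omega
    rw [hins, Finset.filter_insert]
    split <;> simp [Finset.card_insert_of_notMem]
  omega

lemma parts_mono (l : SeqPartition) : ∀ {a b : ℕ}, a ≤ b → l.parts b ≤ l.parts a := by
  intro a b h
  induction b with
  | zero => simp_all
  | succ n ih =>
    rcases Nat.lt_or_ge a (n+1) with h'|h'
    · exact le_trans (l.antitone n) (ih (by omega))
    · have : a = n + 1 := by omega
      subst this; rfl

lemma resCount_eq_sum (e : ℕ) (lam : SeqPartition) (j K : ℕ)
    (hK : ∀ k, K ≤ k → lam.parts k = 0) :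
    resCount e lam j = ∑ k ∈ range K,
      ((range (lam.parts k)).filter
        (fun (b:ℕ) => (((b : ℤ) - (k : ℤ)) : ZMod e) = (j : ZMod e))).card := by
  classical
  set L := lam.parts 0 with hL
  set F : Finset (ℕ × ℕ) := (range K ×ˢ range (L+1)).filter
    (fun pr => pr.2 < lam.parts pr.1 ∧ (((pr.2 : ℤ) - (pr.1 : ℤ)) : ZMod e) = (j : ZMod e))
    with hF
  have hset : {pr : ℕ × ℕ | pr.2 < lam.parts pr.1 ∧
      (((pr.2 : ℤ) - (pr.1 : ℤ)) : ZMod e) = (j : ZMod e)} = (F : Set (ℕ × ℕ)) := by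
    ext pr
    simp only [Set.mem_setOf_eq, hF, coe_filter, mem_product, mem_range]
    constructor
    · intro h
      refine ⟨⟨?_, ?_⟩, h⟩
      · by_contra hc
        have := hK pr.1 (by omega)
        omega
      · have := parts_mono lam (Nat.zero_le pr.1)
        omega
    · exact fun h => h.2
  rw [resCount, hset, Set.ncard_coe_finset, hF, Finset.card_filter, Finset.sum_product]
  apply Finset.sum_congr rfl
  intro k hk
  rw [← Finset.card_filter]
  congr 1
  ext b
  simp only [mem_filter, mem_range]
  have := parts_mono lam (Nat.zero_le k)
  constructor
  · rintro ⟨_, h2, h3⟩; exact ⟨h2, h3⟩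
  · rintro ⟨h2, h3⟩; exact ⟨by omega, h2, h3⟩


set_option maxHeartbeats 2000000 in
/-- Claim in the proof of Proposition 8.3: for an `e`-core `λ` with beta
numbers `J` of charge `0`, setting `M_i = max {x ∈ J : x ≡ i (mod e)}` and
`N_i` the number of nodes of residue `i` (with `N_e = N_0`), we have
`(N_{i-1} - N_i)·e + i = M_i + e` for all `1 ≤ i ≤ e`. -/
theorem core_L_eq_M_add_e (e : ℕ) (he : 2 ≤ e) (lam : SeqPartition)
    (hcore : ∀ x ∈ betaSet lam 0, x - (e : ℤ) ∈ betaSet lam 0)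
    (i : ℕ) (hi1 : 1 ≤ i) (hie : i ≤ e) (Mi : ℤ)
    (hMi : IsGreatest {x ∈ betaSet lam 0 | (x : ZMod e) = (i : ZMod e)} Mi) :
    ((resCount e lam (i - 1) : ℤ) - (resCount e lam i : ℤ)) * e + i
      = Mi + e := by
  classical
  obtain ⟨N, hN⟩ := lam.eventually_zero
  -- beta numbers
  set X : ℕ → ℤ := fun k => (lam.parts k : ℤ) - k with hXdef
  have hmemJ : ∀ z : ℤ, z ∈ betaSet lam 0 ↔ ∃ k, z = X k := by
    intro z; simp [betaSet, hXdef]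
  -- Mi is congruent to i : e ∣ i - Mi
  obtain ⟨c, hc⟩ : (e:ℤ) ∣ (i:ℤ) - Mi := by
    have h2 : ((i:ℕ) : ZMod e) = (((i:ℤ)) : ZMod e) := by push_cast; ring
    have := hMi.1.2
    rw [h2, zmod_int_iff] at this
    exact this
  set d : ℤ := 1 - c with hddef
  have hd : Mi + e - i = e * d := by rw [hddef]; linarith [hc]
  -- choice of m and K
  set m : ℕ := N + Mi.natAbs + e with hmdef
  set K : ℕ := (e - i) + e * m + 1 with hKdef
  have hKN : ∀ k, K ≤ k → lam.parts k = 0 := by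
    intro k hk
    apply hN
    have : m ≤ e * m := Nat.le_mul_of_pos_left m (by omega)
    omega
  have hKint : (K : ℤ) = (e:ℤ) - i + e * m + 1 := by
    rw [hKdef]; push_cast [Nat.cast_sub hie]; ring
  -- m + d ≥ 0
  have hmd : 0 ≤ (m:ℤ) + d := by
    have hcb : c ≤ 1 + (Mi.natAbs : ℤ) := by
      by_contra hcb
      push_neg at hcb
      have h1 : (e:ℤ) * c ≥ e * (2 + Mi.natAbs) := by
        apply mul_le_mul_of_nonneg_left _ (by positivity)
        omega
      have h2 : (i:ℤ) - Mi ≤ e + Mi.natAbs := by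
        have := Int.le_natAbs (a := Mi)
        have : -Mi ≤ Mi.natAbs := by
          rcases Int.natAbs_eq Mi with h|h <;> omega
        have hi' : (i:ℤ) ≤ e := by exact_mod_cast hie
        omega
      have h3 : (e:ℤ) * (2 + Mi.natAbs) ≤ e + Mi.natAbs := by omega
      have h4 : (e:ℤ) * (2 + Mi.natAbs) = 2*e + e * Mi.natAbs := by ring
      have h5 : (e:ℤ) * Mi.natAbs ≥ 1 * Mi.natAbs := by
        apply mul_le_mul_of_nonneg_right _ (by positivity)
        omega
      omega
    have : (Mi.natAbs : ℤ) ≤ m := by rw [hmdef]; push_cast; omega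
    omega
  set T : ℕ := ((m:ℤ) + d).toNat with hTdef
  have hT : (T : ℤ) = (m:ℤ) + d := by rw [hTdef]; omega
  -- per-row predicates
  set q : ℕ → ℕ → Prop := fun k b => (((b : ℤ) - (k : ℤ)) : ZMod e) = ((i:ℕ) : ZMod e) with hqdef
  set p : ℕ → ℕ → Prop := fun k b => (((b : ℤ) - (k : ℤ)) : ZMod e) = ((i-1 : ℕ) : ZMod e) with hpdef
  have hqd : ∀ k b, q k b ↔ (e:ℤ) ∣ (i:ℤ) - (b:ℤ) + (k:ℤ) := fun k b => cond_dvd e i b k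
  have hpd : ∀ k b, p k b ↔ (e:ℤ) ∣ ((i-1:ℕ):ℤ) - (b:ℤ) + (k:ℤ) := fun k b => cond_dvd e (i-1) b k
  have hi1' : ((i-1:ℕ):ℤ) = (i:ℤ) - 1 := by push_cast [Nat.cast_sub hi1]; ring
  have hpq : ∀ k b, p k b ↔ q k (b+1) := by
    intro k b
    rw [hpd, hqd, hi1']
    constructor <;> intro ⟨w, hw⟩ <;> exact ⟨w, by push_cast at hw ⊢; linarith⟩
  -- row identity summed
  have hrow : ∀ k, ((range (lam.parts k)).filter (p k)).card + (if q k 0 then 1 else 0)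
      = ((range (lam.parts k)).filter (q k)).card + (if q k (lam.parts k) then 1 else 0) :=
    fun k => count_shift (q k) (lam.parts k) (p k) (hpq k)
  have hsum : (∑ k ∈ range K, ((range (lam.parts k)).filter (p k)).card)
        + (∑ k ∈ range K, if q k 0 then 1 else 0)
      = (∑ k ∈ range K, ((range (lam.parts k)).filter (q k)).card)
        + (∑ k ∈ range K, if q k (lam.parts k) then 1 else 0) := by
    rw [← Finset.sum_add_distrib, ← Finset.sum_add_distrib]
    exact Finset.sum_congr rfl (fun k _ => hrow k)
  have hA : (∑ k ∈ range K, if q k 0 then 1 else 0)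
      = ((range K).filter (fun k => q k 0)).card := (Finset.card_filter _ _).symm
  have hB : (∑ k ∈ range K, if q k (lam.parts k) then 1 else 0)
      = ((range K).filter (fun k => q k (lam.parts k))).card := (Finset.card_filter _ _).symm
  -- identify the resCounts
  have hres1 : resCount e lam (i-1) = ∑ k ∈ range K, ((range (lam.parts k)).filter (p k)).card :=
    resCount_eq_sum e lam (i-1) K hKN
  have hres2 : resCount e lam i = ∑ k ∈ range K, ((range (lam.parts k)).filter (q k)).card :=
    resCount_eq_sum e lam i K hKN
  -- compute A
  have hAcard : ((range K).filter (fun k => q k 0)).card = m + 1 := by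
    have himg : (range K).filter (fun k => q k 0) = (range (m+1)).image (fun s => (e-i) + e*s) := by
      ext k
      simp only [mem_filter, mem_range, mem_image]
      constructor
      · rintro ⟨hk, hq0⟩
        rw [hqd] at hq0
        obtain ⟨w, hw⟩ := hq0
        push_cast at hw
        have hw1 : (w:ℤ) ≥ 1 := by nlinarith [hw]
        have hkK : (k:ℤ) ≤ (e:ℤ) - i + e*m := by
          have : (k:ℤ) < K := by exact_mod_cast hk
          omega
        have hwm : w ≤ (m:ℤ) + 1 := by
          by_contra hcon
          push_neg at hcon
          have : (e:ℤ) * (m+2) ≤ e * w := by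
            apply mul_le_mul_of_nonneg_left _ (by positivity)
            omega
          nlinarith
        refine ⟨(w-1).toNat, by omega, ?_⟩
        have : (((e-i) + e*(w-1).toNat : ℕ) : ℤ) = (k:ℤ) := by
          push_cast [Nat.cast_sub hie]
          have : ((w-1).toNat : ℤ) = w - 1 := by omega
          rw [this]; linarith
        exact_mod_cast this
      · rintro ⟨s, hs, rfl⟩
        constructor
        · have : e * s ≤ e * m := Nat.mul_le_mul_left e (by omega)
          omega
        · rw [hqd]
          refine ⟨s + 1, ?_⟩
          push_cast [Nat.cast_sub hie]
          ring
    rw [himg, Finset.card_image_of_injective, Finset.card_range]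
    intro a b hab
    simp only at hab
    have : e * a = e * b := by omega
    exact Nat.eq_of_mul_eq_mul_left (by omega) this
  -- compute B
  have hXanti : StrictAnti X := by
    apply strictAnti_nat_of_succ_lt
    intro k
    have := lam.antitone k
    rw [hXdef]
    simp only
    push_cast
    omega
  have hJdown : ∀ t : ℕ, Mi - e * t ∈ betaSet lam 0 := by
    intro t
    induction t with
    | zero => simpa using hMi.1.1
    | succ n ih =>
      have := hcore _ ih
      have heq : Mi - e*(n+1:ℕ) = (Mi - e*n) - e := by push_cast; ring
      rw [heq]; exact this
  have hBcard : ((range K).filter (fun k => q k (lam.parts k))).card = T + 1 := by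
    have himg : ((range K).filter (fun k => q k (lam.parts k))).image X
        = (range (T+1)).image (fun t : ℕ => Mi - e * (t:ℤ)) := by
      ext z
      simp only [mem_image, mem_filter, mem_range]
      constructor
      · rintro ⟨k, ⟨hk, hqk⟩, rfl⟩
        rw [hqd] at hqk
        have hzJ : X k ∈ betaSet lam 0 := (hmemJ _).2 ⟨k, rfl⟩
        have hzres : ((X k : ℤ) : ZMod e) = ((i:ℕ) : ZMod e) := by
          have h2 : ((i:ℕ) : ZMod e) = (((i:ℤ)) : ZMod e) := by push_cast; ring
          rw [h2, zmod_int_iff]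
          obtain ⟨w, hw⟩ := hqk
          exact ⟨w, by rw [hXdef]; simp only; linarith⟩
        have hzle : X k ≤ Mi := hMi.2 ⟨hzJ, hzres⟩
        have hdvd : (e:ℤ) ∣ Mi - X k := by
          obtain ⟨w, hw⟩ := hqk
          refine ⟨w - c, ?_⟩
          have hXk : X k = (lam.parts k : ℤ) - k := rfl
          rw [hXk]
          linear_combination hw - hc
        obtain ⟨t', ht'⟩ := hdvd
        have ht'0 : 0 ≤ t' := by nlinarith
        have hzlb : -((K:ℤ) - 1) ≤ X k := by
          have h1 : (0:ℤ) ≤ lam.parts k := by positivity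
          have h2 : (k:ℤ) ≤ (K:ℤ) - 1 := by
            have : (k:ℤ) < K := by exact_mod_cast hk
            omega
          rw [hXdef]; simp only; omega
        have ht'T : t' ≤ (T:ℤ) := by
          have h1 : (e:ℤ) * t' = Mi - X k := ht'.symm
          have h2 : (e:ℤ) * t' ≤ Mi + (K:ℤ) - 1 := by omega
          have h3 : Mi + (K:ℤ) - 1 = e * (d + m) := by rw [hKint]; linarith [hd]
          rw [hT]
          by_contra hcon
          push_neg at hcon
          have : (e:ℤ) * (d + m + 1) ≤ e * t' := by
            apply mul_le_mul_of_nonneg_left _ (by positivity)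
            omega
          nlinarith
        refine ⟨t'.toNat, by omega, ?_⟩
        have : (t'.toNat : ℤ) = t' := by omega
        rw [this]; omega
      · rintro ⟨t, ht, rfl⟩
        obtain ⟨k, hkz⟩ := (hmemJ _).1 (hJdown t)
        have hzlb : -((K:ℤ) - 1) ≤ Mi - e*t := by
          have h1 : (t:ℤ) ≤ T := by exact_mod_cast Nat.lt_succ_iff.mp ht
          have h2 : (e:ℤ) * t ≤ e * T := by
            apply mul_le_mul_of_nonneg_left h1 (by positivity)
          have h3 : (e:ℤ) * T = e*m + e*d := by rw [hT]; ring
          rw [hKint]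
          linarith [hd]
        have hkK : k < K := by
          by_contra hcon
          push_neg at hcon
          have hz : lam.parts k = 0 := hKN k hcon
          have : X k = -(k:ℤ) := by rw [hXdef]; simp [hz]
          have hKk : (K:ℤ) ≤ k := by exact_mod_cast hcon
          omega
        refine ⟨k, ⟨hkK, ?_⟩, hkz.symm⟩
        rw [hqd]
        refine ⟨c + t, ?_⟩
        have hXk : (lam.parts k : ℤ) - k = Mi - e*t := by
          have : X k = (lam.parts k : ℤ) - k := rfl
          rw [← this, ← hkz]
        linear_combination hc - hXk
    have h1 : (((range K).filter (fun k => q k (lam.parts k))).image X).card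
        = ((range K).filter (fun k => q k (lam.parts k))).card :=
      Finset.card_image_of_injective _ hXanti.injective
    have h2 : ((range (T+1)).image (fun t : ℕ => Mi - e * (t:ℤ))).card = T + 1 := by
      rw [Finset.card_image_of_injective, Finset.card_range]
      intro a b hab
      simp only at hab
      have : (e:ℤ) * a = e * b := by omega
      have he0 : (e:ℤ) ≠ 0 := by positivity
      have : (a:ℤ) = b := mul_left_cancel₀ he0 this
      exact_mod_cast this
    rw [← h1, himg, h2]
  -- conclude
  have hfinal : resCount e lam (i-1) + (m+1) = resCount e lam i + (T+1) := by
    rw [hres1, hres2, ← hAcard, ← hBcard, ← hA, ← hB]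
    exact hsum
  have hz : (resCount e lam (i-1) : ℤ) - (resCount e lam i : ℤ) = d := by
    have : (resCount e lam (i-1) : ℤ) + (m+1) = (resCount e lam i : ℤ) + (T+1) := by
      exact_mod_cast congrArg (fun n : ℕ => (n:ℤ)) hfinal
    rw [hT] at this
    linarith
  rw [hz]
  linarith [hd]
end

section
/- Let λ be an e-core and 1 ≤ m < e. Define ν by ν_i = λ_i + e - m for 0 ≤ i < m and ν_i = min(λ_i + e - m, λ_{i-m}) for i ≥ m. Then ν is a partition, and its beta-number set of charge m equals J ∪ {M_{i_1}(λ) + e, ..., M_{i_m}(λ) + e}, where J is the beta-number set of λ of charge 0 and M_{i_1}(λ) > ... > M_{i_m}(λ) are the m largest values among {max{x ∈ J : x ≡ i mod e} : i ∈ ℤ/eℤ}. -/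
/-- Proposition 8.4: let `λ` be an `e`-core with beta set `J` of charge `0`,
let `M : ℤ/eℤ → ℤ` give the largest beta number on each runner, and let `T` be
the set of the `m` largest values among them.  Define
`ν_i = λ_i + e - m` for `i < m` and `ν_i = min (λ_i + e - m, λ_{i-m})` for
`i ≥ m`.  Then `ν` is a partition (i.e. `τ_m(λ)`), and its beta set of
charge `m` equals `J ∪ (T + e)`. -/
theorem tau_m_beta_set (e m : ℕ) (he : 2 ≤ e) (hm1 : 1 ≤ m) (hme : m < e)
    (lam : SeqPartition)
    (hcore : ∀ x ∈ betaSet lam 0, x - (e : ℤ) ∈ betaSet lam 0)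
    (Mv : ZMod e → ℤ)
    (hMv : ∀ i : ZMod e, IsGreatest {x ∈ betaSet lam 0 | (x : ZMod e) = i} (Mv i))
    (T : Set ℤ) (hT1 : T ⊆ Set.range Mv) (hT2 : T.ncard = m)
    (hT3 : ∀ x ∈ T, ∀ y ∈ Set.range Mv \ T, y < x)
    (nu : ℕ → ℕ)
    (hnu : ∀ k, nu k = if k < m then lam.parts k + (e - m)
      else min (lam.parts k + (e - m)) (lam.parts (k - m))) :
    (∀ k, nu (k + 1) ≤ nu k) ∧ (∃ N, ∀ k, N ≤ k → nu k = 0) ∧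
    {x : ℤ | ∃ k : ℕ, x = (nu k : ℤ) + (m : ℤ) - k}
      = betaSet lam 0 ∪ ((fun x => x + (e : ℤ)) '' T) := by
  classical
  haveI : NeZero e := ⟨by omega⟩
  have he0 : (0:ℤ) < (e:ℤ) := by exact_mod_cast (by omega : 0 < e)
  refine ⟨?_, ?_, ?_⟩
  · -- antitone
    intro k
    rw [hnu k, hnu (k+1)]
    have h1 := lam.antitone k
    by_cases h2 : k + 1 < m
    · simp only [if_pos h2, if_pos (by omega : k < m)]; omega
    · by_cases h3 : k < m
      · simp only [if_neg h2, if_pos h3]; omega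
      · have h4 : k + 1 - m = (k - m) + 1 := by omega
        have h5 := lam.antitone (k - m)
        simp only [if_neg h2, if_neg h3, h4]; omega
  · -- eventually zero
    obtain ⟨N, hN⟩ := lam.eventually_zero
    refine ⟨N + m, fun k hk => ?_⟩
    rw [hnu k, if_neg (by omega : ¬ k < m), hN k (by omega), hN (k-m) (by omega)]
    omega
  · -- the beta set equality
    set β : ℕ → ℤ := fun k => (lam.parts k : ℤ) - k with hβdef
    have hβanti : StrictAnti β := strictAnti_nat_of_succ_lt (fun k => by
      have := lam.antitone k
      simp only [hβdef]; push_cast; omega)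
    have hJmem : ∀ x, x ∈ betaSet lam 0 ↔ ∃ k, x = β k := by
      intro x
      simp only [betaSet, Set.mem_setOf_eq, hβdef]
      constructor
      · rintro ⟨k, rfl⟩; exact ⟨k, by ring⟩
      · rintro ⟨k, rfl⟩; exact ⟨k, by ring⟩
    -- residue basics
    have hdvd : ∀ a b : ℤ, ((a : ZMod e) = (b : ZMod e)) ↔ (e:ℤ) ∣ b - a := by
      intro a b
      rw [ZMod.intCast_eq_intCast_iff]
      exact ⟨Int.ModEq.dvd, fun h => (Int.modEq_iff_dvd.2 h)⟩
    have hwin : ∀ a b : ℤ, ((a : ZMod e) = (b : ZMod e)) → a ≤ b → b < a + e → a = b := by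
      intro a b hr h1 h2
      obtain ⟨c, hc⟩ := (hdvd a b).1 hr
      have hc0 : c = 0 := by
        rcases lt_trichotomy c 0 with h | h | h
        · nlinarith
        · exact h
        · nlinarith
      rw [hc0] at hc
      simp at hc
      omega
    -- downward closure on runners
    have hdownN : ∀ (n : ℕ) (x : ℤ), x ∈ betaSet lam 0 → x - (e:ℤ) * n ∈ betaSet lam 0 := by
      intro n
      induction n with
      | zero => intro x hx; simpa using hx
      | succ n ih =>
        intro x hx
        have := hcore _ (ih x hx)
        have heq : x - (e:ℤ) * ((n+1 : ℕ) : ℤ) = x - (e:ℤ)*n - e := by push_cast; ring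
        rw [heq]; exact this
    have hdown : ∀ x ∈ betaSet lam 0, ∀ y : ℤ, ((y : ZMod e) = (x : ZMod e)) → y ≤ x →
        y ∈ betaSet lam 0 := by
      intro x hx y hr hyx
      obtain ⟨c, hc⟩ := (hdvd y x).1 hr
      have hc0 : 0 ≤ c := by nlinarith
      lift c to ℕ using hc0
      have : y = x - (e:ℤ) * c := by omega
      rw [this]; exact hdownN c x hx
    have hMvJ : ∀ i, Mv i ∈ betaSet lam 0 := fun i => (hMv i).1.1
    have hMvres : ∀ i, ((Mv i : ZMod e)) = i := fun i => (hMv i).1.2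
    have hMvub : ∀ x ∈ betaSet lam 0, x ≤ Mv ((x : ZMod e)) := fun x hx =>
      (hMv _).2 ⟨hx, rfl⟩
    have hTfix : ∀ t ∈ T, t = Mv ((t : ZMod e)) := by
      intro t ht
      obtain ⟨i, hi⟩ := hT1 ht
      rw [← hi, hMvres i, hi]
    have hTJ : ∀ t ∈ T, t ∈ betaSet lam 0 := fun t ht => by
      rw [hTfix t ht]; exact hMvJ _
    have hTfin : T.Finite := Set.Finite.subset (Set.finite_range Mv) hT1
    -- index of an element of J
    have hidx : ∀ x ∈ betaSet lam 0, ∃ j, x = β j := fun x hx => (hJmem x).1 hx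
    have hβlt : ∀ {a b : ℕ}, β a < β b → b < a := by
      intro a b h
      by_contra hab
      exact absurd h (not_lt.2 (hβanti.antitone (not_lt.1 hab)))
    -- key lemma: membership in T
    have keyT : ∀ k : ℕ, β k = Mv ((β k : ZMod e)) →
        (k < m ∨ (m ≤ k ∧ β k + e < β (k - m))) → β k ∈ T := by
      intro k hmax hcase
      by_contra hnT
      have hgt : ∀ t ∈ T, β k < t := by
        intro t ht
        exact hT3 t ht (β k) ⟨⟨_, hmax.symm⟩, hnT⟩
      have hex : ∀ t : ℤ, t ∈ T → ∃ i : ℕ,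
          (i < k ∧ (m ≤ k → k - m < i)) ∧ β i = β k + 1 + (t - β k - 1) % e := by
        intro t ht
        set r : ℤ := (t - β k - 1) % e with hr
        have hr0 : 0 ≤ r := Int.emod_nonneg _ (by omega)
        have hre : r < e := Int.emod_lt_of_pos _ he0
        set t' : ℤ := β k + 1 + r with ht'
        have htt' : ((t' : ZMod e) = (t : ZMod e)) := by
          rw [hdvd]
          have : t - t' = (e:ℤ) * ((t - β k - 1) / e) := by
            have := Int.emod_add_mul_ediv (t - β k - 1) e
            omega
          exact ⟨_, this⟩
        have ht'le : t' ≤ t := by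
          have h1 : (0:ℤ) ≤ (t - β k - 1) / e := Int.ediv_nonneg (by have := hgt t ht; omega) (by omega)
          have := Int.emod_add_mul_ediv (t - β k - 1) e
          nlinarith
        have ht'J : t' ∈ betaSet lam 0 := hdown t (hTJ t ht) t' htt' ht'le
        have ht'ne : t' ≠ β k + e := by
          intro hcon
          have hres : ((β k : ZMod e) = (t : ZMod e)) := by
            rw [hdvd]
            refine ⟨((t - β k - 1)/e) + 1, ?_⟩
            have := Int.emod_add_mul_ediv (t - β k - 1) e
            have : t' = β k + e := hcon
            have h2 : t - t' = (e:ℤ) * ((t - β k - 1) / e) := by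
              have := Int.emod_add_mul_ediv (t - β k - 1) e
              omega
            nlinarith [h2]
          have : β k = t := by
            rw [hmax, hres, ← hTfix t ht]
          exact absurd (hgt t ht) (by omega)
        obtain ⟨i, hi⟩ := hidx t' ht'J
        refine ⟨i, ⟨?_, ?_⟩, hi.symm⟩
        · exact hβlt (by rw [← hi]; omega)
        · intro hmk
          rcases hcase with h | ⟨_, hstr⟩
          · omega
          · apply hβlt
            rw [← hi]
            have : t' < β k + e := by
              rcases lt_or_eq_of_le (by omega : t' ≤ β k + e) with h | h
              · exact h
              · exact absurd h ht'ne
            omega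
      choose! g hg1 hg2 using hex
      have hginj : Set.InjOn g T := by
        intro t1 ht1 t2 ht2 hgeq
        have h1 := hg2 t1 ht1
        have h2 := hg2 t2 ht2
        rw [hgeq, h2] at h1
        have hres : ((t1 : ZMod e) = (t2 : ZMod e)) := by
          rw [hdvd]
          have d1 : (e:ℤ) ∣ (t1 - β k - 1) - (t1 - β k - 1) % e := Int.dvd_self_sub_of_emod_eq rfl
          have d2 : (e:ℤ) ∣ (t2 - β k - 1) - (t2 - β k - 1) % e := Int.dvd_self_sub_of_emod_eq rfl
          have heq : (t1 - β k - 1) % e = (t2 - β k - 1) % e := by omega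
          have : t2 - t1 = ((t2 - β k - 1) - (t2 - β k - 1) % e) - ((t1 - β k - 1) - (t1 - β k - 1) % e) := by omega
          rw [this]
          exact dvd_sub d2 d1
        rw [hTfix t1 ht1, hTfix t2 ht2, hres]
      rcases hcase with hk | ⟨hmk, _⟩
      · have hmaps : Set.MapsTo g T (Set.Iio k) := fun t ht => (hg1 t ht).1
        have := Set.ncard_le_ncard_of_injOn g hmaps hginj (Set.finite_Iio k)
        rw [hT2, ← Finset.coe_Iio, Set.ncard_coe_finset, Nat.card_Iio] at this
        omega
      · have hmaps : Set.MapsTo g T (Set.Ioo (k-m) k) := fun t ht =>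
          ⟨(hg1 t ht).2 hmk, (hg1 t ht).1⟩
        have := Set.ncard_le_ncard_of_injOn g hmaps hginj (Set.finite_Ioo _ _)
        rw [hT2, ← Finset.coe_Ioo, Set.ncard_coe_finset, Nat.card_Ioo] at this
        omega
    -- lemma B : elements of T are high on the abacus
    have lemB : ∀ t ∈ T, ∀ j : ℕ, t = β j → m ≤ j → β j + e ≤ β (j - m) := by
      intro t ht j htj hmj
      by_contra hcon
      push_neg at hcon
      have hmaps : Set.MapsTo (fun i : ℕ => Mv ((β i : ZMod e))) (Set.Icc (j-m) j) T := by
        intro i hi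
        simp only [Set.mem_Icc] at hi
        show Mv ((β i : ZMod e)) ∈ T
        rcases eq_or_lt_of_le hi.2 with h | h
        · rw [h, ← htj, ← hTfix t ht]; exact ht
        · have hβJ : β i ∈ betaSet lam 0 := (hJmem _).2 ⟨i, rfl⟩
          have hub : β i ≤ Mv ((β i : ZMod e)) := hMvub _ hβJ
          by_cases hmem : Mv ((β i : ZMod e)) ∈ T
          · exact hmem
          · exfalso
            have hlt := hT3 t ht _ ⟨⟨_, rfl⟩, hmem⟩
            have hband : β j < β i := hβanti h
            rw [htj] at hlt
            omega
      have hinj : Set.InjOn (fun i : ℕ => Mv ((β i : ZMod e))) (Set.Icc (j-m) j) := by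
        intro i1 hi1 i2 hi2 heq
        simp only [Set.mem_Icc] at hi1 hi2
        have hres : ((β i1 : ZMod e) = (β i2 : ZMod e)) := by
          have := congrArg (fun x : ℤ => (x : ZMod e)) heq
          simpa only [hMvres] using this
        have hb1 : β j ≤ β i1 := hβanti.antitone hi1.2
        have hb2 : β j ≤ β i2 := hβanti.antitone hi2.2
        have hb1' : β i1 ≤ β (j - m) := hβanti.antitone hi1.1
        have hb2' : β i2 ≤ β (j - m) := hβanti.antitone hi2.1
        have : β i1 = β i2 := by
          rcases le_total (β i1) (β i2) with h | h
          · exact hwin _ _ hres h (by omega)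
          · exact (hwin _ _ hres.symm h (by omega)).symm
        exact hβanti.injective this
      have := Set.ncard_le_ncard_of_injOn _ hmaps hinj hTfin
      rw [hT2, ← Finset.coe_Icc, Set.ncard_coe_finset, Nat.card_Icc] at this
      omega
    -- gamma formula
    have hγ : ∀ k : ℕ, (nu k : ℤ) + m - k =
        if k < m then β k + e else min (β k + e) (β (k - m)) := by
      intro k
      rw [hnu k]
      by_cases hk : k < m
      · rw [if_pos hk, if_pos hk]
        simp only [hβdef]
        push_cast [Nat.cast_sub hme.le]
        ring
      · rw [if_neg hk, if_neg hk]
        simp only [hβdef]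
        push_cast [Nat.cast_sub hme.le, Nat.cast_sub (Nat.le_of_not_lt hk)]
        omega
    ext x
    simp only [Set.mem_setOf_eq, Set.mem_union, Set.mem_image]
    constructor
    · rintro ⟨k, hk⟩
      rw [hγ k] at hk
      -- helper: if β k + e ∉ J then β k is a runner max
      have hmaxofnot : ∀ k : ℕ, β k + e ∉ betaSet lam 0 → β k = Mv ((β k : ZMod e)) := by
        intro k' hnot
        have hJ : β k' ∈ betaSet lam 0 := (hJmem _).2 ⟨k', rfl⟩
        have h1 : β k' ≤ Mv ((β k' : ZMod e)) := hMvub _ hJ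
        have h2 : Mv ((β k' : ZMod e)) < β k' + e := by
          by_contra hcon
          push_neg at hcon
          apply hnot
          refine hdown _ (hMvJ _) _ ?_ hcon
          rw [hMvres]
          rw [hdvd]
          exact ⟨-1, by ring⟩
        exact hwin _ _ (by rw [hMvres]) h1 h2
      by_cases hkm : k < m
      · rw [if_pos hkm] at hk
        by_cases hxJ : x ∈ betaSet lam 0
        · exact Or.inl hxJ
        · right
          have hmax : β k = Mv ((β k : ZMod e)) := hmaxofnot k (hk ▸ hxJ)
          have : β k ∈ T := keyT k hmax (Or.inl hkm)
          exact ⟨β k, this, hk.symm⟩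
      · rw [if_neg hkm] at hk
        rcases le_total (β (k - m)) (β k + e) with h | h
        · rw [min_eq_right h] at hk
          exact Or.inl ((hJmem _).2 ⟨k - m, hk⟩)
        · rw [min_eq_left h] at hk
          by_cases hxJ : x ∈ betaSet lam 0
          · exact Or.inl hxJ
          · right
            have hmax : β k = Mv ((β k : ZMod e)) := hmaxofnot k (hk ▸ hxJ)
            have hstr : β k + e < β (k - m) := by
              rcases lt_or_eq_of_le h with h' | h'
              · exact h'
              · exfalso
                apply hxJ
                rw [hk, h']
                exact (hJmem _).2 ⟨k - m, rfl⟩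
            have : β k ∈ T := keyT k hmax (Or.inr ⟨Nat.le_of_not_lt hkm, hstr⟩)
            exact ⟨β k, this, hk.symm⟩
    · rintro (hxJ | ⟨t, ht, rfl⟩)
      · obtain ⟨j, rfl⟩ := hidx x hxJ
        by_cases h1 : β j ≤ β (j + m) + e
        · refine ⟨j + m, ?_⟩
          rw [hγ (j + m), if_neg (by omega), Nat.add_sub_cancel, min_eq_right h1]
        · push_neg at h1
          have hxe : β j - e ∈ betaSet lam 0 := hcore _ hxJ
          obtain ⟨i, hi⟩ := hidx _ hxe
          have hij : j < i := hβlt (by rw [← hi]; omega)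
          have hij2 : i < j + m := by
            have : β (j + m) < β i := by rw [← hi]; omega
            exact hβlt this
          refine ⟨i, ?_⟩
          rw [hγ i]
          by_cases him : i < m
          · rw [if_pos him, ← hi]; ring
          · rw [if_neg him]
            have him' : m ≤ i := Nat.le_of_not_lt him
            have h2 : i - m < j := by omega
            have h3 : β j < β (i - m) := hβanti h2
            rw [min_eq_left (by rw [← hi]; omega), ← hi]; ring
      · have htJ := hTJ t ht
        obtain ⟨j, hj⟩ := hidx t htJ
        refine ⟨j, ?_⟩
        rw [hγ j]
        by_cases hjm : j < m
        · rw [if_pos hjm, ← hj]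
        · have hjm' : m ≤ j := Nat.le_of_not_lt hjm
          have := lemB t ht j hj hjm'
          rw [if_neg hjm, min_eq_left this, ← hj]
end
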